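/- arXiv:2004.07264 — 11 statements merged into one kernel-verified Lean document; each statement's English description precedes it below -/
import Mathlib

section
/- Let X and Y be finite subsets of the integers with |X| ≥ 2 and |Y| ≥ 2, and suppose the smallest difference between two consecutive elements of X is strictly less than the smallest difference between two consecutive elements of Y. Then |X + Y| ≥ |X| + 2|Y| − 2. -/
open Finset Pointwise

/-- If the smallest gap between (consecutive, equivalently any) two elements of `X` is
strictly smaller than that of `Y`, then `|X + Y| ≥ |X| + 2|Y| - 2`. -/
theorem small_gap_sumset (X Y : Finset ℤ) (hX : 2 ≤ X.card) (hY : 2 ≤ Y.card)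
    (dX dY : ℤ)
    (hdX : IsLeast {d : ℤ | ∃ a ∈ X, ∃ b ∈ X, a < b ∧ d = b - a} dX)
    (hdY : IsLeast {d : ℤ | ∃ a ∈ Y, ∃ b ∈ Y, a < b ∧ d = b - a} dY)
    (hlt : dX < dY) :
    X.card + 2 * Y.card ≤ (X + Y).card + 2 := by
  obtain ⟨⟨a, ha, b, hb, hab, hdXeq⟩, hlbX⟩ := hdX
  obtain ⟨-, hlbY⟩ := hdY
  have hYne : Y.Nonempty := Finset.card_pos.mp (by omega)
  set y1 := Y.min' hYne with hy1
  set ym := Y.max' hYne with hym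
  have hy1Y : y1 ∈ Y := Y.min'_mem hYne
  have hymY : ym ∈ Y := Y.max'_mem hYne
  -- no element of X strictly between a and b
  have hmid : ∀ x ∈ X, x ≤ a ∨ b ≤ x := by
    intro x hx
    by_contra h
    push_neg at h
    obtain ⟨h1, h2⟩ := h
    have : dX ≤ x - a := hlbX ⟨a, ha, x, hx, by omega, rfl⟩
    omega
  -- the two translates of Y are disjoint
  have hdisj : Disjoint (Y.image (a + ·)) (Y.image (b + ·)) := by
    rw [Finset.disjoint_left]
    rintro z hz hz'
    obtain ⟨y, hy, rfl⟩ := Finset.mem_image.mp hz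
    obtain ⟨y', hy', heq⟩ := Finset.mem_image.mp hz'
    have hlt' : y' < y := by omega
    have : dY ≤ y - y' := hlbY ⟨y', hy', y, hy, hlt', rfl⟩
    omega
  set A : Finset ℤ := (X.filter (· ≤ a)).image (· + y1) with hA
  set S : Finset ℤ := Y.image (a + ·) ∪ Y.image (b + ·) with hS
  set B : Finset ℤ := (X.filter (fun x => b ≤ x)).image (· + ym) with hB
  have haA : a + y1 ∈ A := Finset.mem_image.mpr ⟨a, Finset.mem_filter.mpr ⟨ha, le_refl a⟩, rfl⟩
  have hbB : b + ym ∈ B := Finset.mem_image.mpr ⟨b, Finset.mem_filter.mpr ⟨hb, le_refl b⟩, rfl⟩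
  set T : Finset ℤ := (A.erase (a + y1) ∪ S) ∪ B.erase (b + ym) with hT
  -- bounds on elements
  have hAbd : ∀ z ∈ A.erase (a + y1), z < a + y1 := by
    intro z hz
    obtain ⟨hne, hz⟩ := Finset.mem_erase.mp hz
    obtain ⟨x, hx, rfl⟩ := Finset.mem_image.mp hz
    have := (Finset.mem_filter.mp hx).2
    omega
  have hSbd : ∀ z ∈ S, a + y1 ≤ z ∧ z ≤ b + ym := by
    intro z hz
    rcases Finset.mem_union.mp hz with h | h <;>
    · obtain ⟨y, hy, rfl⟩ := Finset.mem_image.mp h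
      have h1 := Y.min'_le y hy
      have h2 := Y.le_max' y hy
      constructor <;> omega
  have hBbd : ∀ z ∈ B.erase (b + ym), b + ym < z := by
    intro z hz
    obtain ⟨hne, hz⟩ := Finset.mem_erase.mp hz
    obtain ⟨x, hx, rfl⟩ := Finset.mem_image.mp hz
    have := (Finset.mem_filter.mp hx).2
    omega
  -- T ⊆ X + Y
  have hTsub : T ⊆ X + Y := by
    intro z hz
    rcases Finset.mem_union.mp hz with h | h
    · rcases Finset.mem_union.mp h with h | h
      · obtain ⟨x, hx, rfl⟩ := Finset.mem_image.mp (Finset.mem_of_mem_erase h)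
        exact Finset.add_mem_add (Finset.mem_filter.mp hx).1 hy1Y
      · rcases Finset.mem_union.mp h with h | h <;>
        · obtain ⟨y, hy, rfl⟩ := Finset.mem_image.mp h
          first
          | exact Finset.add_mem_add ha hy
          | exact Finset.add_mem_add hb hy
    · obtain ⟨x, hx, rfl⟩ := Finset.mem_image.mp (Finset.mem_of_mem_erase h)
      exact Finset.add_mem_add (Finset.mem_filter.mp hx).1 hymY
  -- disjointness for card computation
  have hd1 : Disjoint (A.erase (a + y1)) S := by
    rw [Finset.disjoint_left]
    intro z h1 h2
    have := hAbd z h1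
    have := (hSbd z h2).1
    omega
  have hd2 : Disjoint (A.erase (a + y1) ∪ S) (B.erase (b + ym)) := by
    rw [Finset.disjoint_left]
    intro z h1 h2
    have hb2 := hBbd z h2
    rcases Finset.mem_union.mp h1 with h | h
    · have h3 := hAbd z h
      have h4 := Y.min'_le ym hymY
      omega
    · have := (hSbd z h).2
      omega
  -- cardinalities
  have hcardA : A.card = (X.filter (· ≤ a)).card :=
    Finset.card_image_of_injective _ (add_left_injective y1)
  have hcardB : B.card = (X.filter (fun x => b ≤ x)).card :=
    Finset.card_image_of_injective _ (add_left_injective ym)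
  have hcardS : S.card = Y.card + Y.card := by
    rw [hS, Finset.card_union_of_disjoint hdisj,
      Finset.card_image_of_injective _ (add_right_injective a),
      Finset.card_image_of_injective _ (add_right_injective b)]
  have hsplit : (X.filter (· ≤ a)).card + (X.filter (fun x => b ≤ x)).card = X.card := by
    have hcongr : X.filter (fun x => b ≤ x) = X.filter (fun x => ¬ x ≤ a) := by
      apply Finset.filter_congr
      intro x hx
      have := hmid x hx
      constructor <;> intro h <;> simp_all <;> omega
    rw [hcongr]
    exact Finset.card_filter_add_card_filter_not _
  have hcardT : T.card = (A.card - 1 + S.card) + (B.card - 1) := by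
    rw [hT, Finset.card_union_of_disjoint hd2, Finset.card_union_of_disjoint hd1,
      Finset.card_erase_of_mem haA, Finset.card_erase_of_mem hbB]
  have hAge : 1 ≤ A.card := Finset.card_pos.mpr ⟨_, haA⟩
  have hBge : 1 ≤ B.card := Finset.card_pos.mpr ⟨_, hbB⟩
  have hle := Finset.card_le_card hTsub
  omega
end

section
/- Let Y ⊆ π(B) where B = {1,...,n₁} × ... × {1,...,n_k} ⊆ ℤ^k and π : ℤ^k → {0} × ℤ^{k−1} is projection away from the first coordinate, and let v ∈ {0} × {0,1}^{k−1} be a nonzero vector. Then the number of points x ∈ ℤ^{k−1} such that exactly one of x and x + v lies in co(Y) (the set of lattice points in the convex hull of Y) is at most 2(k−1)·(min_i n_i)^{-1}·n₁^{-1}·|B|. -/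
open Finset

private lemma seg_mem {α : Type*} [AddCommGroup α] [Module ℝ α] {C : Set α}
    (hC : Convex ℝ C) {p w : α} {r t : ℝ} (h0 : 0 ≤ r) (hrt : r ≤ t)
    (hp : p ∈ C) (hq : p + t • w ∈ C) : p + r • w ∈ C := by
  rcases eq_or_lt_of_le (h0.trans hrt) with h | h
  · have hr : r = 0 := le_antisymm (hrt.trans h.symm.le) h0
    simpa [hr] using hp
  · have hkey : p + r • w = (1 - r / t) • p + (r / t) • (p + t • w) := by
      rw [smul_add, smul_smul, div_mul_cancel₀ _ h.ne', sub_smul, one_smul]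
      abel
    rw [hkey]
    exact hC hp hq (by rw [sub_nonneg]; exact div_le_one_of_le₀ hrt h.le)
      (div_nonneg h0 h.le) (by ring)

/-- For `Y` contained in the projected box `π(B)` and a nonzero `0/1` vector `v`,
the number of `x` such that exactly one of `x`, `x+v` lies in the set of lattice points
of the convex hull of `Y` is at most `2(k-1) (min nᵢ)⁻¹ n₁⁻¹ |B|` (here `k = m+1`). -/
theorem surface_obs (m : ℕ) (n : Fin (m + 1) → ℕ) (Y : Finset (Fin m → ℤ))
    (hY : ∀ y ∈ Y, ∀ i : Fin m, 1 ≤ y i ∧ y i ≤ (n i.succ : ℤ))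
    (v : Fin m → ℤ) (hv0 : v ≠ 0) (hv : ∀ i, v i = 0 ∨ v i = 1) :
    Set.ncard {x : Fin m → ℤ |
        Xor' ((fun i => (x i : ℝ)) ∈ convexHull ℝ ((fun (y : Fin m → ℤ) (i : Fin m) => (y i : ℝ)) '' ↑Y))
             ((fun i => ((x + v) i : ℝ)) ∈ convexHull ℝ ((fun (y : Fin m → ℤ) (i : Fin m) => (y i : ℝ)) '' ↑Y))}
        * (⨅ i, n i) * n 0
      ≤ 2 * m * ∏ i, n i := by
  classical
  rcases Nat.eq_zero_or_pos (⨅ i, n i) with hmin | hmin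
  · simp [hmin]
  rcases Nat.eq_zero_or_pos (n 0) with hn0 | hn0
  · simp [hn0]
  have hminle : ∀ i, (⨅ i, n i) ≤ n i := fun i => ciInf_le (OrderBot.bddBelow _) i
  have hpos : ∀ i, 1 ≤ n i := fun i => hmin.trans_le (hminle i)
  set e : (Fin m → ℤ) → (Fin m → ℝ) := fun x i => (x i : ℝ) with he
  set H : Set (Fin m → ℝ) :=
    convexHull ℝ ((fun (y : Fin m → ℤ) (i : Fin m) => (y i : ℝ)) '' ↑Y) with hH
  set C : Set (Fin m → ℤ) := {x | e x ∈ H} with hCdef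
  set S : Set (Fin m → ℤ) := {x | Xor' (x ∈ C) (x + v ∈ C)} with hSdef
  show S.ncard * (⨅ i, n i) * n 0 ≤ 2 * m * ∏ i, n i
  have hconv : Convex ℝ H := convex_convexHull ℝ _
  have ecast : ∀ (x : Fin m → ℤ) (s : ℤ), e (x + s • v) = e x + (s : ℝ) • e v := by
    intro x s; funext i
    simp only [he, Pi.add_apply, Pi.smul_apply, smul_eq_mul, Pi.smul_apply]
    push_cast; ring
  have hCBox : ∀ x ∈ C, ∀ i, 1 ≤ x i ∧ x i ≤ (n i.succ : ℤ) := by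
    intro x hx i
    have hsub : H ⊆ {z : Fin m → ℝ | ∀ i, (1:ℝ) ≤ z i ∧ z i ≤ (n i.succ : ℝ)} := by
      apply convexHull_min
      · rintro _ ⟨y, hy, rfl⟩ j
        obtain ⟨h1, h2⟩ := hY y hy j
        refine ⟨?_, ?_⟩
        · show (1:ℝ) ≤ (y j : ℝ); exact_mod_cast h1
        · show (y j : ℝ) ≤ (n j.succ : ℝ); exact_mod_cast h2
      · have hset : {z : Fin m → ℝ | ∀ i, (1:ℝ) ≤ z i ∧ z i ≤ (n i.succ : ℝ)}
            = Set.pi Set.univ (fun i => Set.Icc (1:ℝ) (n i.succ : ℝ)) := by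
          ext z; simp [Set.mem_pi, Set.mem_Icc, -Set.pi_univ_Icc]
        rw [hset]; exact convex_pi fun i _ => convex_Icc _ _
    have hzi := hsub hx i
    simp only [he] at hzi
    exact ⟨by exact_mod_cast hzi.1, by exact_mod_cast hzi.2⟩
  have hseg : ∀ (x : Fin m → ℤ) (s t : ℤ), 0 ≤ s → s ≤ t →
      x ∈ C → x + t • v ∈ C → x + s • v ∈ C := by
    intro x s t h0 hst hx ht
    have hres := seg_mem hconv (p := e x) (w := e v) (r := (s:ℝ)) (t := (t:ℝ))
      (by exact_mod_cast h0) (by exact_mod_cast hst) hx (by rw [← ecast]; exact ht)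
    show e (x + s • v) ∈ H
    rw [ecast]; exact hres
  obtain ⟨j, hj⟩ : ∃ j, v j = 1 := by
    obtain ⟨j, hj⟩ := Function.ne_iff.mp hv0
    exact ⟨j, (hv j).resolve_left hj⟩
  set T : (Fin m → ℤ) → Set ℤ :=
    fun x => {t | ∀ i, 1 ≤ x i + t * v i ∧ x i + t * v i ≤ (n i.succ : ℤ)} with hTdef
  have hmemT : ∀ x (t : ℤ), x + t • v ∈ C → t ∈ T x := by
    intro x t hx i
    have := hCBox _ hx i
    simpa [Pi.add_apply, Pi.smul_apply, smul_eq_mul] using this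
  have hT_spec : ∀ x ∈ S, sSup (T x) ∈ T x ∧ (sSup (T x)) + 1 ∉ T x := by
    intro x hx
    have hor : x ∈ C ∨ x + v ∈ C := by
      rcases hx with ⟨h, _⟩ | ⟨h, _⟩
      · exact Or.inl h
      · exact Or.inr h
    have hne : (T x).Nonempty := by
      rcases hor with h | h
      · exact ⟨0, hmemT x 0 (by simpa using h)⟩
      · exact ⟨1, hmemT x 1 (by simpa using h)⟩
    have hbdd : BddAbove (T x) := by
      refine ⟨(n j.succ : ℤ) - x j, fun t ht => ?_⟩
      have := (ht j).2
      rw [hj] at this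
      omega
    refine ⟨Int.csSup_mem hne hbdd, fun hmem => ?_⟩
    have := le_csSup hbdd hmem
    omega
  set BoxF : Finset (Fin m → ℤ) :=
    Fintype.piFinset fun i => Finset.Icc (1:ℤ) (n i.succ : ℤ) with hBoxF
  set E' : Finset (Fin m → ℤ) :=
    BoxF.filter fun y => ∃ i, v i = 1 ∧ y i = (n i.succ : ℤ) with hE'def
  set F : (Fin m → ℤ) → (Fin m → ℤ) × Bool :=
    fun x => (x + sSup (T x) • v, decide (x ∈ C)) with hFdef
  have hmaps : ∀ x ∈ S, F x ∈ (↑(E' ×ˢ (Finset.univ : Finset Bool)) : Set ((Fin m → ℤ) × Bool)) := by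
    intro x hx
    obtain ⟨ht, ht1⟩ := hT_spec x hx
    refine Finset.mem_coe.mpr (Finset.mem_product.mpr ⟨?_, Finset.mem_univ _⟩)
    show x + sSup (T x) • v ∈ E'
    set t := sSup (T x) with htdef
    have hbox : x + t • v ∈ BoxF := by
      rw [hBoxF, Fintype.mem_piFinset]
      intro l
      rw [Finset.mem_Icc]
      have := ht l
      simpa [Pi.add_apply, Pi.smul_apply, smul_eq_mul] using this
    rw [hE'def, Finset.mem_filter]
    refine ⟨hbox, ?_⟩
    by_contra hcon
    push_neg at hcon
    apply ht1
    intro i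
    rcases hv i with h0 | h1
    · have := ht i
      simpa [h0] using this
    · have h2 := hcon i h1
      have h3 := ht i
      rw [h1] at h3
      have h4 : (x + t • v) i = x i + t := by
        simp [Pi.add_apply, Pi.smul_apply, smul_eq_mul, h1]
      rw [h4] at h2
      rw [h1]
      constructor <;> omega
  have claim : ∀ x ∈ S, ∀ x' ∈ S, (x ∈ C ↔ x' ∈ C) → ∀ s : ℤ, 0 ≤ s →
      x' = x + s • v → x = x' := by
    intro x hx x' hx' hiff s hs hxx'
    rcases eq_or_lt_of_le hs with h | h
    · rw [hxx', ← h]; simp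
    · exfalso
      have hs1 : (1:ℤ) ≤ s := h
      by_cases hxC : x ∈ C
      · have hx'C : x' ∈ C := hiff.mp hxC
        have hxvC : x + v ∉ C := by
          rcases hx with ⟨_, hnb⟩ | ⟨_, hna⟩
          · exact hnb
          · exact absurd hxC hna
        apply hxvC
        have := hseg x 1 s (by norm_num) hs1 hxC (hxx' ▸ hx'C)
        simpa using this
      · have hx'C : x' ∉ C := fun h' => hxC (hiff.mpr h')
        have hxvC : x + v ∈ C := by
          rcases hx with ⟨ha, _⟩ | ⟨hb, _⟩
          · exact absurd ha hxC
          · exact hb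
        have hx'vC : x' + v ∈ C := by
          rcases hx' with ⟨ha, _⟩ | ⟨hb, _⟩
          · exact absurd ha hx'C
          · exact hb
        apply hx'C
        have hq : x + v + s • v ∈ C := by
          have heq : x + v + s • v = x' + v := by rw [hxx']; abel
          rw [heq]; exact hx'vC
        have := hseg (x + v) (s - 1) s (by omega) (by omega) hxvC hq
        have heq2 : x + v + (s - 1) • v = x' := by
          rw [hxx', sub_smul, one_smul]; abel
        rwa [heq2] at this
  have hinj : Set.InjOn F S := by
    intro x hx x' hx' hF
    have h2 := congrArg Prod.snd hF
    simp only [hFdef] at h2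
    have hiff : x ∈ C ↔ x' ∈ C := by
      exact decide_eq_decide.mp h2
    have h1 := congrArg Prod.fst hF
    simp only [hFdef] at h1
    set t := sSup (T x)
    set t' := sSup (T x')
    have hxx' : x' = x + (t - t') • v := by
      have h1' : x + t • v = x' + t' • v := h1
      rw [sub_smul]
      have h1'' : x' = x + t • v - t' • v := by rw [h1']; abel
      rw [h1'']; abel
    rcases le_total t' t with hle | hle
    · exact claim x hx x' hx' hiff (t - t') (by omega) hxx'
    · refine (claim x' hx' x hx hiff.symm (t' - t) (by omega) ?_).symm
      rw [hxx', sub_smul, sub_smul]; abel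
  have hcard : S.ncard ≤ E'.card * 2 := by
    have hfin : (↑(E' ×ˢ (Finset.univ : Finset Bool)) : Set ((Fin m → ℤ) × Bool)).Finite :=
      Finset.finite_toSet _
    have := Set.ncard_le_ncard_of_injOn F hmaps hinj hfin
    rwa [Set.ncard_coe_finset, Finset.card_product, Finset.card_univ, Fintype.card_bool] at this
  have hEi : ∀ i : Fin m,
      (BoxF.filter fun y => y i = (n i.succ : ℤ)).card * n i.succ = ∏ l : Fin m, n l.succ := by
    intro i
    have hfe : BoxF.filter (fun y => y i = (n i.succ : ℤ))
        = Fintype.piFinset (Function.update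
            (fun l => Finset.Icc (1:ℤ) (n l.succ : ℤ)) i {(n i.succ : ℤ)}) := by
      ext y
      simp only [hBoxF, Finset.mem_filter, Fintype.mem_piFinset]
      constructor
      · rintro ⟨hA, hB⟩ l
        by_cases hl : l = i
        · subst hl; simp [hB]
        · rw [Function.update_of_ne hl]; exact hA l
      · intro h
        have hi := h i
        rw [Function.update_self, Finset.mem_singleton] at hi
        refine ⟨fun l => ?_, hi⟩
        by_cases hl : l = i
        · rw [hl, hi, Finset.mem_Icc]
          refine ⟨?_, le_refl _⟩
          exact_mod_cast hpos (Fin.succ i)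
        · have := h l; rwa [Function.update_of_ne hl] at this
    rw [hfe, Fintype.card_piFinset]
    rw [← Finset.mul_prod_erase Finset.univ _ (Finset.mem_univ i)]
    rw [Function.update_self, Finset.card_singleton, one_mul]
    have hco : ∀ l ∈ Finset.univ.erase i,
        (Function.update (fun l => Finset.Icc (1:ℤ) (n l.succ : ℤ)) i {(n i.succ : ℤ)} l).card
          = n l.succ := by
      intro l hl
      rw [Function.update_of_ne (Finset.ne_of_mem_erase hl)]
      rw [Int.card_Icc]
      omega
    rw [Finset.prod_congr rfl hco]
    exact Finset.prod_erase_mul Finset.univ _ (Finset.mem_univ i)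
  have hE'le : E'.card ≤ ∑ i ∈ Finset.univ.filter (fun i => v i = 1),
      (BoxF.filter fun y => y i = (n i.succ : ℤ)).card := by
    refine le_trans (Finset.card_le_card ?_) (Finset.card_biUnion_le)
    intro y hy
    rw [hE'def, Finset.mem_filter] at hy
    obtain ⟨hbox, i, hi1, hi2⟩ := hy
    exact Finset.mem_biUnion.mpr ⟨i, Finset.mem_filter.mpr ⟨Finset.mem_univ _, hi1⟩,
      Finset.mem_filter.mpr ⟨hbox, hi2⟩⟩
  have key : E'.card * (⨅ i, n i) ≤ m * ∏ l : Fin m, n l.succ := by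
    calc E'.card * (⨅ i, n i)
        ≤ (∑ i ∈ Finset.univ.filter (fun i => v i = 1),
            (BoxF.filter fun y => y i = (n i.succ : ℤ)).card) * (⨅ i, n i) :=
          Nat.mul_le_mul_right _ hE'le
      _ = ∑ i ∈ Finset.univ.filter (fun i => v i = 1),
            (BoxF.filter fun y => y i = (n i.succ : ℤ)).card * (⨅ i, n i) := by
          rw [Finset.sum_mul]
      _ ≤ ∑ i ∈ Finset.univ.filter (fun i => v i = 1),
            (BoxF.filter fun y => y i = (n i.succ : ℤ)).card * n i.succ :=
          Finset.sum_le_sum fun i _ => Nat.mul_le_mul_left _ (hminle i.succ)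
      _ = ∑ i ∈ Finset.univ.filter (fun i => v i = 1), ∏ l : Fin m, n l.succ :=
          Finset.sum_congr rfl fun i _ => hEi i
      _ = (Finset.univ.filter (fun i => v i = 1)).card * ∏ l : Fin m, n l.succ := by
          rw [Finset.sum_const, smul_eq_mul]
      _ ≤ m * ∏ l : Fin m, n l.succ :=
          Nat.mul_le_mul_right _ (le_trans (Finset.card_filter_le _ _) (by simp))
  calc S.ncard * (⨅ i, n i) * n 0
      ≤ (E'.card * 2) * (⨅ i, n i) * n 0 :=
        Nat.mul_le_mul_right _ (Nat.mul_le_mul_right _ hcard)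
    _ = 2 * (E'.card * (⨅ i, n i)) * n 0 := by ring
    _ ≤ 2 * (m * ∏ l : Fin m, n l.succ) * n 0 :=
        Nat.mul_le_mul_right _ (Nat.mul_le_mul_left _ key)
    _ = 2 * m * ∏ i, n i := by rw [Fin.prod_univ_succ]; ring
end

section
/- Let P̃ ⊆ conv(B) be a convex polytope, where B = {1,...,n₁} × ... × {1,...,n_k} ⊆ ℤ^k and conv(B) is its real convex hull, and let P = P̃ ∩ ℤ^k. Then | vol(P̃) − |P| | ≤ 2k(k+1)·(min_i n_i)^{-1}·|B|, where vol denotes Lebesgue measure, |P| the number of lattice points, and |B| = n₁⋯n_k. -/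
/-! Tile space by the half-open unit cubes `x + [0, 1)^k`, `x ∈ ℤ^k`. On a cube contained in the
polytope `K` or disjoint from it, volume and lattice-point count agree, so the error is at most
the number of boundary cubes, those meeting `K` without lying inside it.

For a boundary cube `x`, separate a point of it outside `K` from `K` by a hyperplane and let `i`
be a coordinate where the normal is largest in absolute value, `σ` its sign. Along the line of
cubes through `x` parallel to the `i`-th axis, every cube meeting `K` is then at most `k` steps
beyond `x` in direction `σ`. Hence boundary cubes carrying the same label `(i, σ)` on one line
occupy at most `k + 1` positions, and there are at most `2 (k + 1) ∑ᵢ ∏_{j ≠ i} nⱼ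
≤ 2k(k + 1) |B| / min nᵢ` boundary cubes in all. -/

open Finset MeasureTheory

theorem Int.card_le_of_forall_sub_le {s : Finset ℤ} {m : ℕ} (h : ∀ a ∈ s, ∀ b ∈ s, a - b ≤ m) :
    #s ≤ m + 1 := by
  rcases s.eq_empty_or_nonempty with rfl | hs
  · simp
  calc #s ≤ #(Icc (s.min' hs) (s.min' hs + m)) := card_le_card fun a ha =>
        mem_Icc.2 ⟨min'_le s a ha, by linarith [h a ha _ (min'_mem s hs)]⟩
    _ = m + 1 := by rw [Int.card_Icc]; omega

section

variable {ι : Type*} {K : Set (ι → ℝ)} {S : Finset (ι → ℤ)}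

def unitCube (x : ι → ℤ) : Set (ι → ℝ) :=
  Set.univ.pi fun j => Set.Ico (x j : ℝ) (x j + 1)

def IsBoundaryCube (K : Set (ι → ℝ)) (x : ι → ℤ) : Prop :=
  (K ∩ unitCube x).Nonempty ∧ ¬ unitCube x ⊆ K

theorem mem_unitCube_iff_floor {x : ι → ℤ} {y : ι → ℝ} :
    y ∈ unitCube x ↔ ∀ j, ⌊y j⌋ = x j := by
  simp [unitCube, Int.floor_eq_iff]

theorem coe_mem_unitCube (x : ι → ℤ) : (fun j => (x j : ℝ)) ∈ unitCube x :=
  mem_unitCube_iff_floor.2 fun _ => Int.floor_intCast _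

theorem floor_mem_unitCube (y : ι → ℝ) : y ∈ unitCube fun j => ⌊y j⌋ :=
  mem_unitCube_iff_floor.2 fun _ => rfl

theorem pairwise_disjoint_unitCube : Pairwise (Function.onFun Disjoint (unitCube (ι := ι))) := by
  intro x x' hne
  refine Set.disjoint_left.2 fun y hy hy' => hne (funext fun j => ?_)
  rw [← mem_unitCube_iff_floor.1 hy j, mem_unitCube_iff_floor.1 hy' j]

theorem abs_sub_sub_lt_one_of_mem_unitCube {x x' : ι → ℤ} {y y' : ι → ℝ}
    (hy : y ∈ unitCube x) (hy' : y' ∈ unitCube x') (j : ι) :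
    |((x' j - x j : ℤ) : ℝ) - (y' j - y j)| < 1 := by
  obtain ⟨h₁, h₂⟩ := hy j trivial
  obtain ⟨h₁', h₂'⟩ := hy' j trivial
  rw [abs_sub_lt_iff]
  push_cast
  constructor <;> linarith

open Classical in
theorem ncard_lattice_points_eq_card_filter (hS : ∀ x, (K ∩ unitCube x).Nonempty → x ∈ S) :
    {x : ι → ℤ | (fun j => (x j : ℝ)) ∈ K}.ncard = #{x ∈ S | (fun j => (x j : ℝ)) ∈ K} := by
  rw [← Set.ncard_coe_finset]
  congr 1
  ext x
  simpa using fun hx => hS x ⟨_, hx, coe_mem_unitCube x⟩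

variable [Fintype ι]

theorem measurableSet_unitCube (x : ι → ℤ) : MeasurableSet (unitCube x) :=
  MeasurableSet.univ_pi fun _ => measurableSet_Ico

theorem volume_unitCube (x : ι → ℤ) : volume (unitCube x) = 1 := by
  simp [unitCube, volume_pi_pi, Real.volume_Ico]

theorem volume_eq_sum_inter_unitCube (hK : MeasurableSet K)
    (hS : ∀ x, (K ∩ unitCube x).Nonempty → x ∈ S) :
    volume K = ∑ x ∈ S, volume (K ∩ unitCube x) := by
  have hcover : K = ⋃ x ∈ S, K ∩ unitCube x := by
    refine subset_antisymm (fun y hy => ?_) (by simp)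
    exact Set.mem_biUnion (hS _ ⟨y, hy, floor_mem_unitCube y⟩) ⟨hy, floor_mem_unitCube y⟩
  conv_lhs => rw [hcover]
  refine measure_biUnion_finset (fun x _ x' _ hne => ?_)
    fun x _ => hK.inter (measurableSet_unitCube x)
  exact (pairwise_disjoint_unitCube hne).mono Set.inter_subset_right Set.inter_subset_right

open Classical in
theorem abs_volume_inter_unitCube_sub_le (x : ι → ℤ) :
    |(volume (K ∩ unitCube x)).toReal - if (fun j => (x j : ℝ)) ∈ K then 1 else 0|
      ≤ if IsBoundaryCube K x then 1 else 0 := by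
  have hle : volume (K ∩ unitCube x) ≤ 1 :=
    (measure_mono Set.inter_subset_right).trans (volume_unitCube x).le
  by_cases hx : IsBoundaryCube K x
  · have h₁ : (volume (K ∩ unitCube x)).toReal ≤ 1 :=
      ENNReal.toReal_le_of_le_ofReal zero_le_one (by simpa using hle)
    have h₀ : 0 ≤ (volume (K ∩ unitCube x)).toReal := ENNReal.toReal_nonneg
    rw [if_pos hx, abs_le]
    split_ifs <;> constructor <;> linarith
  rw [if_neg hx]
  by_cases hne : (K ∩ unitCube x).Nonempty
  · have hsub : unitCube x ⊆ K := not_not.1 fun h => hx ⟨hne, h⟩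
    simp [Set.inter_eq_self_of_subset_right hsub, volume_unitCube, hsub (coe_mem_unitCube x)]
  · have hxK : (fun j => (x j : ℝ)) ∉ K := fun h => hne ⟨_, h, coe_mem_unitCube x⟩
    simp [Set.not_nonempty_iff_eq_empty.1 hne, hxK]

open Classical in
theorem abs_volume_sub_ncard_le_card_isBoundaryCube (hK : MeasurableSet K)
    (hS : ∀ x, (K ∩ unitCube x).Nonempty → x ∈ S) :
    |(volume K).toReal - {x : ι → ℤ | (fun j => (x j : ℝ)) ∈ K}.ncard|
      ≤ #{x ∈ S | IsBoundaryCube K x} := by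
  have hfin : ∀ x ∈ S, volume (K ∩ unitCube x) ≠ ⊤ := fun x _ =>
    measure_ne_top_of_subset Set.inter_subset_right (by simp [volume_unitCube])
  rw [volume_eq_sum_inter_unitCube hK hS, ENNReal.toReal_sum hfin,
    ncard_lattice_points_eq_card_filter hS, natCast_card_filter, natCast_card_filter,
    ← sum_sub_distrib]
  exact (abs_sum_le_sum_abs _ _).trans (sum_le_sum fun x _ => abs_volume_inter_unitCube_sub_le x)

theorem exists_sign_mul_lt_card_of_sum_mul_neg {a : ι → ℝ} (ha : a ≠ 0) :
    ∃ (i : ι) (σ : ℤˣ), ∀ d : ι → ℝ, (∀ j ≠ i, |d j| ≤ 1) → ∑ j, a j * d j < 0 →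
      ((σ : ℤ) : ℝ) * d i < Fintype.card ι := by
  classical
  obtain ⟨j₀, hj₀⟩ := Function.ne_iff.1 ha
  obtain ⟨i, -, hi⟩ := exists_max_image univ (fun j => |a j|) ⟨j₀, mem_univ _⟩
  have hai : 0 < |a i| := (abs_pos.2 hj₀).trans_le (hi j₀ (mem_univ _))
  obtain ⟨σ, hσ⟩ : ∃ σ : ℤˣ, a i = |a i| * ((σ : ℤ) : ℝ) := by
    rcases lt_or_gt_of_ne (abs_pos.1 hai) with h | h
    · exact ⟨-1, by simp [abs_of_neg h]⟩
    · exact ⟨1, by simp [abs_of_pos h]⟩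
  refine ⟨i, σ, fun d hd hneg => ?_⟩
  have hrest : -∑ j ∈ univ.erase i, a j * d j ≤ |a i| * Fintype.card ι :=
    calc -∑ j ∈ univ.erase i, a j * d j ≤ ∑ j ∈ univ.erase i, |a j| * |d j| := by
          simpa only [abs_mul] using
            (neg_le_abs (∑ j ∈ univ.erase i, a j * d j)).trans (abs_sum_le_sum_abs _ _)
      _ ≤ ∑ _j ∈ univ.erase i, |a i| := sum_le_sum fun j hj =>
          (mul_le_of_le_one_right (abs_nonneg _) (hd j (ne_of_mem_erase hj))).trans
            (hi j (mem_univ _))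
      _ ≤ ∑ _j, |a i| := sum_le_sum_of_subset_of_nonneg (erase_subset _ _)
          fun _ _ _ => abs_nonneg _
      _ = |a i| * Fintype.card ι := by simp [mul_comm]
  rw [← add_sum_erase _ _ (mem_univ i), hσ] at hneg
  have : |a i| * (((σ : ℤ) : ℝ) * d i) < |a i| * Fintype.card ι := by linarith
  exact lt_of_mul_lt_mul_left this hai.le

theorem exists_sign_mul_le_card_of_isBoundaryCube (hKc : Convex ℝ K)
    (hKcl : IsClosed K) {x : ι → ℤ} (hx : IsBoundaryCube K x) :
    ∃ (i : ι) (σ : ℤˣ), ∀ x', (K ∩ unitCube x').Nonempty → (∀ j ≠ i, x' j = x j) →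
      σ * (x' i - x i) ≤ Fintype.card ι := by
  classical
  obtain ⟨⟨q₀, hq₀K, -⟩, hxK⟩ := hx
  obtain ⟨p, hpx, hpK⟩ := Set.not_subset.1 hxK
  obtain ⟨f, u, hfK, hfp⟩ := geometric_hahn_banach_closed_point hKc hKcl hpK
  set a : ι → ℝ := fun j => f (Pi.single j 1)
  have hf : ∀ y, f y = ∑ j, a j * y j := fun y => by
    conv_lhs => rw [pi_eq_sum_univ' y]
    simp [a, mul_comm]
  have ha : a ≠ 0 := by
    rintro ha
    have := (hfK q₀ hq₀K).trans hfp
    simp [hf, ha] at this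
  obtain ⟨i, σ, hiσ⟩ := exists_sign_mul_lt_card_of_sum_mul_neg ha
  refine ⟨i, σ, fun x' ⟨q, hqK, hqx'⟩ hline => ?_⟩
  have hclose := abs_sub_sub_lt_one_of_mem_unitCube hpx hqx'
  have hd : ∀ j ≠ i, |q j - p j| ≤ 1 := fun j hj => by
    simpa [hline j hj, abs_sub_comm] using (hclose j).le
  have hneg : ∑ j, a j * (q j - p j) < 0 := by
    simpa [mul_sub, sum_sub_distrib, hf] using (hfK q hqK).trans hfp
  have hσd := hiσ _ hd hneg
  have hclose_i := abs_sub_lt_iff.1 (hclose i)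
  have : ((σ * (x' i - x i) : ℤ) : ℝ) < Fintype.card ι + 1 := by
    rcases Int.units_eq_one_or σ with rfl | rfl <;> push_cast at hσd hclose_i ⊢ <;> linarith
  exact_mod_cast Int.lt_add_one_iff.1 (by exact_mod_cast this)

variable [DecidableEq ι]

theorem mem_piFinset_Icc_of_inter_unitCube_nonempty {a b : ι → ℤ}
    (hK : K ⊆ Set.univ.pi fun j => Set.Icc (a j : ℝ) (b j)) :
    ∀ x, (K ∩ unitCube x).Nonempty → x ∈ Fintype.piFinset fun j => Icc (a j) (b j) := by
  rintro x ⟨y, hyK, hyx⟩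
  refine Fintype.mem_piFinset.2 fun j => mem_Icc.2 ?_
  obtain ⟨hay, hyb⟩ := hK hyK j trivial
  obtain ⟨hxy, hyx⟩ := hyx j trivial
  constructor
  · have : (a j : ℝ) < x j + 1 := hay.trans_lt hyx
    exact Int.lt_add_one_iff.1 (by exact_mod_cast this)
  · exact_mod_cast hxy.trans hyb

theorem card_le_mul_prod_erase_of_forall_sub_le {A : Finset (ι → ℤ)} {t : ι → Finset ℤ}
    (hA : A ⊆ Fintype.piFinset t) (i : ι) (m : ℕ)
    (h : ∀ x ∈ A, ∀ x' ∈ A, (∀ j ≠ i, x' j = x j) → x' i - x i ≤ m) :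
    #A ≤ (m + 1) * ∏ j ∈ univ.erase i, #(t j) := by
  have hmaps : ∀ x ∈ A, Function.update x i 0 ∈ Fintype.piFinset (Function.update t i {0}) :=
    fun x hx => Fintype.mem_piFinset.2 fun j => by
      rcases eq_or_ne j i with rfl | hj
      · simp
      · simpa [hj] using Fintype.mem_piFinset.1 (hA hx) j
  have hline : ∀ x ∈ A, ∀ x' ∈ A, Function.update x' i 0 = Function.update x i 0 →
      ∀ j ≠ i, x' j = x j := fun x _ x' _ hxx' j hj => by
    simpa [hj] using congrFun hxx' j
  refine (card_le_mul_card_image_of_maps_to hmaps (m + 1) fun b _ => ?_).trans_eq ?_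
  · set L := {x ∈ A | Function.update x i 0 = b}
    have hinj : Set.InjOn (fun x : ι → ℤ => x i) L := fun x hx x' hx' hxx' => by
      simp only [L, mem_coe, mem_filter] at hx hx'
      funext j
      rcases eq_or_ne j i with rfl | hj
      · exact hxx'
      · exact (hline x' hx'.1 x hx.1 (hx.2.trans hx'.2.symm) j hj)
    rw [← card_image_of_injOn hinj]
    refine Int.card_le_of_forall_sub_le ?_
    simp only [mem_image, L, mem_filter]
    rintro _ ⟨x', ⟨hx', hx'b⟩, rfl⟩ _ ⟨x, ⟨hx, hxb⟩, rfl⟩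
    exact h x hx x' hx' (hline x hx x' hx' (hx'b.trans hxb.symm))
  · rw [Fintype.card_piFinset]
    simp [Function.apply_update (fun _ s => #s), prod_update_of_mem (mem_univ i),
      sdiff_singleton_eq_erase]

theorem card_le_of_forall_isBoundaryCube (hKc : Convex ℝ K) (hKcl : IsClosed K)
    {A : Finset (ι → ℤ)} {t : ι → Finset ℤ} (hA : A ⊆ Fintype.piFinset t)
    (hAK : ∀ x ∈ A, IsBoundaryCube K x) :
    #A ≤ 2 * (Fintype.card ι + 1) * ∑ i, ∏ j ∈ univ.erase i, #(t j) := by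
  classical
  set c := Fintype.card ι
  let part : ι × ℤˣ → Finset (ι → ℤ) := fun l =>
    {x ∈ A | ∀ x' ∈ A, (∀ j ≠ l.1, x' j = x j) → l.2 * (x' l.1 - x l.1) ≤ c}
  have hcover : A ⊆ univ.biUnion part := fun x hx => by
    obtain ⟨i, σ, h⟩ := exists_sign_mul_le_card_of_isBoundaryCube hKc hKcl (hAK x hx)
    exact mem_biUnion.2 ⟨(i, σ), mem_univ _, mem_filter.2 ⟨hx, fun x' hx' =>
      h x' (hAK x' hx').1⟩⟩
  have hpart : ∀ i σ, #(part (i, σ)) ≤ (c + 1) * ∏ j ∈ univ.erase i, #(t j) := fun i σ => by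
    refine card_le_mul_prod_erase_of_forall_sub_le ((filter_subset _ _).trans hA) i c
      fun x hx x' hx' hline => ?_
    obtain ⟨hxA, hx⟩ := mem_filter.1 hx
    obtain ⟨hx'A, hx'⟩ := mem_filter.1 hx'
    have h₁ := hx x' hx'A hline
    have h₂ := hx' x hxA fun j hj => (hline j hj).symm
    rcases Int.units_eq_one_or σ with rfl | rfl <;>
      simp only [Units.val_one, Units.val_neg, one_mul, neg_one_mul, neg_sub] at h₁ h₂ <;> linarith
  calc #A ≤ ∑ l : ι × ℤˣ, #(part l) := (card_le_card hcover).trans card_biUnion_le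
    _ ≤ ∑ l : ι × ℤˣ, (c + 1) * ∏ j ∈ univ.erase l.1, #(t j) :=
        sum_le_sum fun l _ => hpart l.1 l.2
    _ = 2 * (c + 1) * ∑ i, ∏ j ∈ univ.erase i, #(t j) := by
        simp [Fintype.sum_prod_type, mul_sum, mul_assoc]

theorem sum_prod_erase_mul_iInf_le (n : ι → ℕ) :
    (∑ i, ∏ j ∈ univ.erase i, n j) * ⨅ i, n i ≤ Fintype.card ι * ∏ i, n i :=
  calc (∑ i, ∏ j ∈ univ.erase i, n j) * ⨅ i, n i
      ≤ ∑ i, (∏ j ∈ univ.erase i, n j) * n i := by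
        rw [sum_mul]
        exact sum_le_sum fun i _ => Nat.mul_le_mul_left _ (ciInf_le (OrderBot.bddBelow _) i)
    _ = Fintype.card ι * ∏ i, n i := by simp [prod_erase_mul]

theorem abs_volume_sub_ncard_le_of_subset_box (hKc : Convex ℝ K) (hKcl : IsClosed K)
    {n : ι → ℕ} (hK : K ⊆ Set.univ.pi fun j => Set.Icc 1 (n j : ℝ)) :
    |(volume K).toReal - {x : ι → ℤ | (fun j => (x j : ℝ)) ∈ K}.ncard|
      ≤ 2 * (Fintype.card ι + 1) * ∑ i, ∏ j ∈ univ.erase i, (n j : ℝ) := by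
  classical
  set S := Fintype.piFinset fun j => Icc (1 : ℤ) (n j)
  have hS := mem_piFinset_Icc_of_inter_unitCube_nonempty (K := K) (a := 1) (b := fun j => n j)
    (by simpa using hK)
  have hcard := card_le_of_forall_isBoundaryCube hKc hKcl (filter_subset (IsBoundaryCube K) S)
    fun x hx => (mem_filter.1 hx).2
  calc _ ≤ (#{x ∈ S | IsBoundaryCube K x} : ℝ) :=
        abs_volume_sub_ncard_le_card_isBoundaryCube hKcl.measurableSet hS
    _ ≤ _ := by simpa using (Nat.cast_le (α := ℝ)).2 hcard

end

/-- For a convex polytope `P̃` contained in the convex hull of the box `B`,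
the volume of `P̃` and the number of lattice points of `P̃` differ by at most
`2k(k+1) (min nᵢ)⁻¹ |B|`. -/
theorem polytope_volume_vs_lattice_points (k : ℕ) (hk : 0 < k) (n : Fin k → ℕ)
    (V : Finset (Fin k → ℝ))
    (hP : convexHull ℝ (V : Set (Fin k → ℝ)) ⊆
      convexHull ℝ ((fun (x : Fin k → ℤ) (i : Fin k) => (x i : ℝ)) ''
        {x : Fin k → ℤ | ∀ i, 1 ≤ x i ∧ x i ≤ (n i : ℤ)})) :
    |(volume (convexHull ℝ (V : Set (Fin k → ℝ)))).toReal -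
        (Set.ncard {x : Fin k → ℤ | (fun i => (x i : ℝ)) ∈ convexHull ℝ (V : Set (Fin k → ℝ))} : ℝ)|
      ≤ 2 * k * (k + 1) / ((⨅ i, n i : ℕ) : ℝ) * ∏ i, (n i : ℝ) := by
  set K := convexHull ℝ (V : Set (Fin k → ℝ))
  have hbox : K ⊆ Set.univ.pi fun i => Set.Icc 1 (n i : ℝ) := by
    refine hP.trans (convexHull_min ?_ (convex_pi fun i _ => convex_Icc _ _))
    rintro _ ⟨x, hx, rfl⟩ i -
    dsimp only
    exact ⟨by exact_mod_cast (hx i).1, by exact_mod_cast (hx i).2⟩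
  rcases K.eq_empty_or_nonempty with hK | ⟨y, hy⟩
  · simp only [hK, measure_empty, ENNReal.toReal_zero, Set.mem_empty_iff_false, Set.ofPred_false,
      Set.ncard_empty, CharP.cast_eq_zero, sub_zero, abs_zero]
    positivity
  have : Nonempty (Fin k) := Fin.pos_iff_nonempty.1 hk
  have hn : 1 ≤ ⨅ i, n i := le_ciInf fun i => by
    exact_mod_cast (hbox hy i trivial).1.trans (hbox hy i trivial).2
  have hmul :
      (∑ i, ∏ j ∈ univ.erase i, (n j : ℝ)) * ((⨅ i, n i : ℕ) : ℝ) ≤ k * ∏ i, (n i : ℝ) := by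
    simpa using (Nat.cast_le (α := ℝ)).2 (sum_prod_erase_mul_iInf_le n)
  rw [div_mul_eq_mul_div, le_div_iff₀ (by exact_mod_cast hn)]
  calc _ ≤ 2 * (k + 1) * (∑ i, ∏ j ∈ univ.erase i, (n j : ℝ)) * ((⨅ i, n i : ℕ) : ℝ) := by
        gcongr
        simpa using abs_volume_sub_ncard_le_of_subset_box (convex_convexHull ℝ _)
          (V.finite_toSet.isClosed_convexHull ℝ) hbox
    _ ≤ 2 * (k + 1) * (k * ∏ i, (n i : ℝ)) := by rw [mul_assoc]; gcongr
    _ = 2 * k * (k + 1) * ∏ i, (n i : ℝ) := by ring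
end

section
/- Let A' ⊆ B = {1,...,n₁} × ... × {1,...,n_k} ⊆ ℤ^k. Then d_k(A') ≤ 2^k·|co(A') \ A'| + 2^{k+2}k(k+1)·(min_i n_i)^{-1}·|B|, where d_k(A') = |A' + A'| − 2^k|A'| and co(A') is the set of lattice points in the convex hull of A'. -/
/-!
Let `K` be the convex hull of `A'` and, for a set `H` of coordinates, let `D_H` be the set of
integer points `x` such that `x` with its `H`-coordinates halved lies in `K`. Then
`A' + A' ⊆ D_univ` (midpoints) and `D_∅ = co(A')`. For `j ∉ H`, every line parallel to the `j`-th
axis meets `D_{H ∪ {j}}` in an interval, which has at most twice as many points as it has points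
with even `j`-th coordinate, plus one; halving the `j`-th coordinate maps the latter injectively
into `D_H`. Hence `|D_{H ∪ {j}}| ≤ 2 |D_H| + #lines`, and there are at most
`2^|H| ∏_{i ≠ j} nᵢ ≤ 2^|H| |B| / min nᵢ` lines. Iterating over the `k` coordinates gives
`|A' + A'| ≤ 2^k |co(A')| + k 2^k |B| / min nᵢ`.
-/

open Finset Pointwise Function

theorem Convex.ordConnected_setOf_update_mem {ι : Type*} [DecidableEq ι] {K : Set (ι → ℝ)}
    (hK : Convex ℝ K) (p : ι → ℝ) (j : ι) : Set.OrdConnected {r : ℝ | update p j r ∈ K} :=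
  ⟨fun a ha b hb r hr => hK.segment_subset ha hb <| by
    rw [← Pi.image_update_segment]
    exact Set.mem_image_of_mem _ (Icc_subset_segment hr)⟩

theorem Finset.card_le_two_mul_card_filter_even_add_card_image {ι : Type*} [DecidableEq ι]
    [DecidableEq (ι → ℤ)] (S : Finset (ι → ℤ)) (j : ι)
    (hS : ∀ x : ι → ℤ, Set.OrdConnected {c : ℤ | update x j c ∈ S}) :
    #S ≤ 2 * #{x ∈ S | Even (x j)} + #(S.image (update · j 0)) := by
  -- An odd point whose successor on its line lies in `S` is matched with that (even) successor;
  -- by order-connectedness, each line holds at most one odd point without a successor.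
  set next : (ι → ℤ) → (ι → ℤ) := fun x => update x j (x j + 1)
  have hsplit := card_filter_add_card_filter_not (s := S) (fun x => Even (x j))
  have hodd := card_filter_add_card_filter_not (s := {x ∈ S | ¬Even (x j)}) (next · ∈ S)
  have hnext : #{x ∈ {x ∈ S | ¬Even (x j)} | next x ∈ S} ≤ #{x ∈ S | Even (x j)} := by
    refine card_le_card_of_injOn next (fun x hx => ?_) (fun x _ y _ hxy => ?_)
    · simp only [mem_coe, mem_filter] at hx ⊢
      refine ⟨hx.2, ?_⟩
      simpa [next] using (Int.not_even_iff_odd.mp hx.1.2).add_one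
    · have hj := congrFun hxy j
      simp only [next, update_self, add_left_inj] at hj
      have h := congrArg (update · j (x j)) hxy
      simp only [next, update_idem, update_eq_self] at h
      rwa [hj, update_eq_self] at h
  have hlast : #{x ∈ {x ∈ S | ¬Even (x j)} | next x ∉ S} ≤ #(S.image (update · j 0)) := by
    refine card_le_card_of_injOn (update · j 0) (fun x hx => ?_) (fun x hx y hy hxy => ?_)
    · simp only [mem_coe, mem_filter] at hx
      exact mem_image_of_mem _ hx.1.1
    · simp only [mem_coe, mem_filter] at hx hy
      have hline : ∀ c, update x j c = update y j c := fun c => by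
        simpa using congrArg (update · j c) hxy
      have hx' : x j ∈ {c : ℤ | update x j c ∈ S} := by simpa using hx.1.1
      have hy' : y j ∈ {c : ℤ | update x j c ∈ S} := by simpa [hline] using hy.1.1
      have hxy_j : x j = y j := by
        by_contra hne
        rcases lt_or_gt_of_ne hne with h | h
        · exact hx.2 ((hS x).out hx' hy' ⟨by omega, by omega⟩)
        · exact hy.2 (by simpa [next, hline] using (hS x).out hy' hx' ⟨by omega, by omega⟩)
      rw [← update_eq_self j x, hline, hxy_j, update_eq_self]
  omega

theorem le_two_pow_card_mul_add_of_insert_le {α : Type*} [DecidableEq α] {f : Finset α → ℝ}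
    {M : ℝ} (hM : 0 ≤ M) (hf : ∀ j H, j ∉ H → f (insert j H) ≤ 2 * f H + 2 ^ #H * M)
    (H : Finset α) : f H ≤ 2 ^ #H * f ∅ + #H * 2 ^ #H * M := by
  induction H using Finset.induction_on with
  | empty => simp
  | insert j H hj ih =>
    rw [card_insert_of_notMem hj, pow_succ]
    push_cast
    have h2M : 0 ≤ 2 ^ #H * M := by positivity
    nlinarith [hf j H hj]

theorem convexHull_intCast_subset_pi_Icc {ι : Type*} {n : ι → ℕ} {A : Finset (ι → ℤ)}
    (hA : ∀ a ∈ A, ∀ i, 1 ≤ a i ∧ a i ≤ (n i : ℤ)) :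
    convexHull ℝ ((fun (a : ι → ℤ) (i : ι) => (a i : ℝ)) '' ↑A) ⊆
      Set.univ.pi fun i => Set.Icc 1 (n i : ℝ) := by
  refine convexHull_min ?_ (convex_pi fun i _ => convex_Icc _ _)
  rintro _ ⟨a, ha, rfl⟩ i -
  simp only [Set.mem_Icc]
  exact_mod_cast hA a ha i

section HalfLattice

variable {ι : Type*} [DecidableEq ι]

noncomputable def halfScale (H : Finset ι) (x : ι → ℤ) : ι → ℝ :=
  fun i => if i ∈ H then (x i : ℝ) / 2 else x i

theorem halfScale_update (H : Finset ι) (x : ι → ℤ) (j : ι) (c : ℤ) :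
    halfScale H (update x j c) = update (halfScale H x) j (if j ∈ H then (c : ℝ) / 2 else c) := by
  ext i
  by_cases hi : i = j
  · subst hi; simp [halfScale]
  · simp [halfScale, hi]

@[simp]
theorem halfScale_empty (x : ι → ℤ) : halfScale ∅ x = fun i => (x i : ℝ) := by
  ext i
  simp [halfScale]

variable [Fintype ι]

-- The set `D_H` of the header; the box only serves to make it finite (see `mem_halfLattice`).
noncomputable def halfLattice (n : ι → ℕ) (K : Set (ι → ℝ)) (H : Finset ι) :
    Finset (ι → ℤ) := by
  classical exact {x ∈ Fintype.piFinset fun i => Icc 1 ((if i ∈ H then 2 else 1) * (n i : ℤ)) |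
    halfScale H x ∈ K}

variable {n : ι → ℕ} {K : Set (ι → ℝ)}

theorem halfLattice_subset_piFinset (H : Finset ι) :
    halfLattice n K H ⊆ Fintype.piFinset fun i => Icc 1 ((if i ∈ H then 2 else 1) * (n i : ℤ)) := by
  classical
  unfold halfLattice
  exact filter_subset _ _

theorem mem_halfLattice (hK : K ⊆ Set.univ.pi fun i => Set.Icc 1 (n i : ℝ)) {H : Finset ι}
    {x : ι → ℤ} : x ∈ halfLattice n K H ↔ halfScale H x ∈ K := by
  classical
  refine ⟨fun hx => (mem_filter.mp hx).2, fun hx => mem_filter.mpr ⟨?_, hx⟩⟩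
  refine Fintype.mem_piFinset.mpr fun i => mem_Icc.mpr ?_
  obtain ⟨h1, h2⟩ := hK hx i (Set.mem_univ i)
  by_cases hi : i ∈ H
  · simp only [halfScale, hi, if_true] at h1 h2 ⊢
    exact ⟨by exact_mod_cast (by linarith : (1 : ℝ) ≤ x i),
      by exact_mod_cast (by linarith : (x i : ℝ) ≤ 2 * n i)⟩
  · simp only [halfScale, hi, if_false, one_mul] at h1 h2 ⊢
    exact ⟨by exact_mod_cast h1, by exact_mod_cast h2⟩

theorem ordConnected_setOf_update_mem_halfLattice
    (hK : K ⊆ Set.univ.pi fun i => Set.Icc 1 (n i : ℝ)) (hKc : Convex ℝ K) (H : Finset ι)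
    (j : ι) (x : ι → ℤ) : Set.OrdConnected {c : ℤ | update x j c ∈ halfLattice n K H} := by
  have hmono : Monotone fun c : ℤ => if j ∈ H then (c : ℝ) / 2 else c := by
    intro a b hab
    have : (a : ℝ) ≤ b := by exact_mod_cast hab
    split_ifs <;> linarith
  simpa only [Set.preimage_ofPred_eq, mem_halfLattice hK, halfScale_update] using
    (hKc.ordConnected_setOf_update_mem (halfScale H x) j).preimage_mono hmono

theorem card_filter_even_halfLattice_insert_le
    (hK : K ⊆ Set.univ.pi fun i => Set.Icc 1 (n i : ℝ)) {H : Finset ι} {j : ι} (hj : j ∉ H) :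
    #{x ∈ halfLattice n K (insert j H) | Even (x j)} ≤ #(halfLattice n K H) := by
  refine card_le_card_of_injOn (fun x => update x j (x j / 2)) (fun x hx => ?_) ?_
  · obtain ⟨hxD, m, hm⟩ := mem_filter.mp hx
    rw [mem_coe, mem_halfLattice hK]
    rw [mem_halfLattice hK] at hxD
    convert hxD using 1
    rw [halfScale_update, if_neg hj]
    ext i
    by_cases hi : i = j
    · subst hi
      have hhalf : x i / 2 = m := by omega
      simp [halfScale, hj, hhalf]
      rw [hm]
      push_cast
      ring
    · simp [halfScale, hi]
  · intro x hx y hy hxy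
    obtain ⟨-, a, ha⟩ := mem_filter.mp hx
    obtain ⟨-, b, hb⟩ := mem_filter.mp hy
    have hj' := congrFun hxy j
    simp only [update_self] at hj'
    have hxyj : x j = y j := by omega
    have h := congrArg (update · j (x j)) hxy
    simp only [update_idem, update_eq_self] at h
    rwa [hxyj, update_eq_self] at h

theorem card_image_update_halfLattice_insert_le {H : Finset ι} {j : ι} (hj : j ∉ H) :
    #((halfLattice n K (insert j H)).image (update · j 0)) ≤ 2 ^ #H * ∏ i ∈ univ.erase j, n i := by
  have hsub : (halfLattice n K (insert j H)).image (update · j 0) ⊆ Fintype.piFinset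
      (update (fun i => Icc 1 ((if i ∈ insert j H then 2 else 1) * (n i : ℤ))) j {0}) := by
    simp only [image_subset_iff, Fintype.mem_piFinset]
    intro x hx i
    by_cases hi : i = j
    · subst hi; simp
    · simpa [hi] using Fintype.mem_piFinset.mp (halfLattice_subset_piFinset _ hx) i
  refine (card_le_card hsub).trans_eq ?_
  rw [Fintype.card_piFinset, ← mul_prod_erase univ _ (mem_univ j), update_self, card_singleton,
    one_mul]
  have hcount : ∀ i ∈ univ.erase j, #(update (fun i => Icc 1 ((if i ∈ insert j H then 2 else 1) *
      (n i : ℤ))) j {0} i) = (if i ∈ H then 2 else 1) * n i := by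
    intro i hi
    have hij : i ≠ j := ne_of_mem_erase hi
    simp only [update_of_ne hij, Int.card_Icc, add_sub_cancel_right, mem_insert, hij, false_or]
    split_ifs <;> omega
  have hH : univ.erase j ∩ H = H :=
    inter_eq_right.mpr fun i hi => mem_erase.mpr ⟨ne_of_mem_of_not_mem hi hj, mem_univ i⟩
  rw [prod_congr rfl hcount, prod_mul_distrib, prod_ite_mem, hH, prod_const]

theorem card_halfLattice_insert_le (hK : K ⊆ Set.univ.pi fun i => Set.Icc 1 (n i : ℝ))
    (hKc : Convex ℝ K) {H : Finset ι} {j : ι} (hj : j ∉ H) :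
    #(halfLattice n K (insert j H)) ≤
      2 * #(halfLattice n K H) + 2 ^ #H * ∏ i ∈ univ.erase j, n i := by
  have hlines := (halfLattice n K (insert j H)).card_le_two_mul_card_filter_even_add_card_image j
    (ordConnected_setOf_update_mem_halfLattice hK hKc _ j)
  have hevens := card_filter_even_halfLattice_insert_le hK hj
  have himage := card_image_update_halfLattice_insert_le (n := n) (K := K) hj
  exact hlines.trans (add_le_add (Nat.mul_le_mul_left 2 hevens) himage)

theorem prod_erase_le_prod_div (n : ι → ℕ) (j : ι) {m : ℕ} (hm : 0 < m) (hmj : m ≤ n j) :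
    (∏ i ∈ univ.erase j, n i : ℝ) ≤ (∏ i, n i : ℝ) / m := by
  rw [le_div_iff₀ (by exact_mod_cast hm), ← mul_prod_erase univ _ (mem_univ j), mul_comm]
  gcongr

theorem card_add_self_le_halfLattice_empty (hK : K ⊆ Set.univ.pi fun i => Set.Icc 1 (n i : ℝ))
    (hKc : Convex ℝ K) {A : Finset (ι → ℤ)} (hA : ∀ a ∈ A, (fun i => (a i : ℝ)) ∈ K) {m : ℕ}
    (hm : 0 < m) (hmn : ∀ i, m ≤ n i) :
    (#(A + A) : ℝ) ≤ 2 ^ Fintype.card ι * #(halfLattice n K ∅) +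
      Fintype.card ι * 2 ^ Fintype.card ι * ((∏ i, n i : ℝ) / m) := by
  have hsum : A + A ⊆ halfLattice n K univ := by
    intro z hz
    obtain ⟨a, ha, b, hb, rfl⟩ := mem_add.mp hz
    rw [mem_halfLattice hK]
    convert hKc (hA a ha) (hA b hb) (by norm_num : (0 : ℝ) ≤ 1 / 2) (by norm_num : (0 : ℝ) ≤ 1 / 2)
      (by norm_num) using 1
    ext i
    simp [halfScale]
    ring
  have hstep : ∀ j H, j ∉ H → (#(halfLattice n K (insert j H)) : ℝ) ≤
      2 * #(halfLattice n K H) + 2 ^ #H * ((∏ i, n i : ℝ) / m) := by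
    intro j H hj
    have hprod := prod_erase_le_prod_div n j hm (hmn j)
    have hcard : (#(halfLattice n K (insert j H)) : ℝ) ≤
        2 * #(halfLattice n K H) + 2 ^ #H * ∏ i ∈ univ.erase j, (n i : ℝ) := by
      exact_mod_cast card_halfLattice_insert_le hK hKc hj
    nlinarith [pow_pos (two_pos : (0 : ℝ) < 2) #H]
  have hiter := le_two_pow_card_mul_add_of_insert_le (f := fun H => (#(halfLattice n K H) : ℝ))
    (by positivity) hstep univ
  rw [card_univ] at hiter
  exact (Nat.cast_le.mpr (card_le_card hsum)).trans hiter

end HalfLattice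

/-- For `A' ⊆ B`, `d_k(A') ≤ 2^k |co(A') \ A'| + 2^{k+2} k (k+1) (min nᵢ)⁻¹ |B|`. -/
theorem doubling_le_convex_defect (k : ℕ) (hk : 0 < k) (n : Fin k → ℕ)
    (A' : Finset (Fin k → ℤ))
    (hbox : ∀ a ∈ A', ∀ i, 1 ≤ a i ∧ a i ≤ (n i : ℤ)) :
    ((A' + A').card : ℝ) - 2 ^ k * A'.card ≤
      2 ^ k * (Set.ncard {x : Fin k → ℤ |
          (fun i => (x i : ℝ)) ∈ convexHull ℝ ((fun (a : Fin k → ℤ) (i : Fin k) => (a i : ℝ)) '' ↑A')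
          ∧ x ∉ A'} : ℝ)
        + 2 ^ (k + 2) * k * (k + 1) / ((⨅ i, n i : ℕ) : ℝ) * ∏ i, (n i : ℝ) := by
  rcases A'.eq_empty_or_nonempty with rfl | ⟨a, ha⟩
  · simp only [add_empty, card_empty, Nat.cast_zero, mul_zero, sub_zero]
    positivity
  set K := convexHull ℝ ((fun (a : Fin k → ℤ) (i : Fin k) => (a i : ℝ)) '' ↑A')
  have hKbox : K ⊆ Set.univ.pi fun i => Set.Icc 1 (n i : ℝ) := convexHull_intCast_subset_pi_Icc hbox
  have hA : ∀ b ∈ A', (fun i => (b i : ℝ)) ∈ K := fun b hb => subset_convexHull ℝ _ ⟨b, hb, rfl⟩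
  have hco : ∀ x, x ∈ halfLattice n K ∅ ↔ (fun i => (x i : ℝ)) ∈ K := fun x => by
    rw [mem_halfLattice hKbox, halfScale_empty]
  have hmin : 1 ≤ ⨅ i, n i := by
    have := Fin.pos_iff_nonempty.mp hk
    exact le_ciInf fun i => by have := hbox a ha i; omega
  have key := card_add_self_le_halfLattice_empty hKbox (convex_convexHull ℝ _) hA hmin
    (fun i => ciInf_le (OrderBot.bddBelow _) i)
  have hdefect : {x : Fin k → ℤ | (fun i => (x i : ℝ)) ∈ K ∧ x ∉ A'} = ↑(halfLattice n K ∅ \ A') := by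
    ext x; simp [hco]
  have hsplit : (#(halfLattice n K ∅ \ A') : ℝ) + #A' = #(halfLattice n K ∅) := by
    exact_mod_cast card_sdiff_add_card_eq_card fun b hb => (hco b).mpr (hA b hb)
  have hcoef : (k : ℝ) * 2 ^ k * ((∏ i, n i : ℝ) / (⨅ i, n i : ℕ)) ≤
      2 ^ (k + 2) * k * (k + 1) / (⨅ i, n i : ℕ) * ∏ i, (n i : ℝ) := by
    rw [div_mul_eq_mul_div, mul_div_assoc]
    refine mul_le_mul_of_nonneg_right ?_ (by positivity)
    rw [pow_add]
    have h := mul_nonneg (pow_nonneg zero_le_two k) (k.cast_nonneg : (0 : ℝ) ≤ k)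
    nlinarith [mul_nonneg h (k.cast_nonneg : (0 : ℝ) ≤ k)]
  rw [hdefect, Set.ncard_coe_finset]
  rw [Fintype.card_fin, ← hsplit] at key
  linarith
end

section
/- In any parallelogram in ℝ^d with four distinct vertices p, q, r, s (so that p + r = q + s), the longer diagonal is strictly longer than every side: if |p − r| ≥ |q − s| then |p − r| > |p − q|, |p − r| > |p − s|, |p − r| > |r − q|, and |p − r| > |r − s|. -/
/-- In a (possibly degenerate) parallelogram with four distinct vertices `p, q, r, s`
(so `p + r = q + s`), the longer diagonal is strictly longer than every side. -/
theorem parallelogram_long_diagonal (d : ℕ) (p q r s : EuclideanSpace ℝ (Fin d))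
    (hpq : p ≠ q) (hpr : p ≠ r) (hps : p ≠ s) (hqr : q ≠ r) (hqs : q ≠ s) (hrs : r ≠ s)
    (hpar : p + r = q + s) (hdiag : dist q s ≤ dist p r) :
    dist p q < dist p r ∧ dist p s < dist p r ∧ dist r q < dist p r ∧ dist r s < dist p r := by
  have hpr' : dist p r = ‖(p - q) + (p - s)‖ := by
    rw [dist_eq_norm]
    congr 1
    have : r = q + s - p := by rw [← hpar]; abel
    rw [this]; abel
  have hqs' : dist q s = ‖(p - q) - (p - s)‖ := by
    rw [dist_comm, dist_eq_norm]; congr 1; abel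
  have hrq : dist r q = dist p s := by
    rw [dist_eq_norm, dist_comm, dist_eq_norm]
    congr 1
    have : r = q + s - p := by rw [← hpar]; abel
    rw [this]; abel
  have hrs' : dist r s = dist p q := by
    rw [dist_eq_norm, dist_comm, dist_eq_norm]
    congr 1
    have : r = q + s - p := by rw [← hpar]; abel
    rw [this]; abel
  have hlaw := parallelogram_law_with_norm ℝ (p - q) (p - s)
  have h1 : dist p q = ‖p - q‖ := dist_eq_norm p q
  have h2 : dist p s = ‖p - s‖ := dist_eq_norm p s
  have hq0 : 0 < dist p q := dist_pos.mpr hpq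
  have hs0 : 0 < dist p s := dist_pos.mpr hps
  have hd0 : 0 ≤ dist p r := dist_nonneg
  have hqs0 : 0 ≤ dist q s := dist_nonneg
  rw [hpr'] at hdiag ⊢
  rw [hqs'] at hdiag
  constructor
  · nlinarith [hlaw, hq0, hs0]
  constructor
  · nlinarith [hlaw, hq0, hs0]
  constructor
  · rw [hrq]; nlinarith [hlaw, hq0, hs0]
  · rw [hrs']; nlinarith [hlaw, hq0, hs0]
end

section
/- Let S be a finite set of points in ℤ^{k−1}, and for each x ∈ ℤ^{k−1} \ S let f(x) be a point of S closest to x in Euclidean distance. Then the map x ↦ x + f(x) is injective on ℤ^{k−1} \ S: for distinct x, y ∉ S, x + f(x) ≠ y + f(y). -/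
open Finset

/-- If `f x` is a point of `S` closest to `x` in Euclidean distance for each `x ∉ S`,
then `x ↦ x + f x` is injective on the complement of `S`. -/
theorem nearest_point_sum_injective (m : ℕ) (S : Finset (Fin m → ℤ)) (hS : S.Nonempty)
    (f : (Fin m → ℤ) → (Fin m → ℤ))
    (hfS : ∀ x ∉ S, f x ∈ S)
    (hmin : ∀ x ∉ S, ∀ s ∈ S,
      ∑ i, ((x i : ℝ) - (f x i : ℝ)) ^ 2 ≤ ∑ i, ((x i : ℝ) - (s i : ℝ)) ^ 2)
    (x y : Fin m → ℤ) (hx : x ∉ S) (hy : y ∉ S) (hxy : x ≠ y) :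
    x + f x ≠ y + f y := by
  intro heq
  apply hxy
  have heqi : ∀ i, (x i : ℝ) + f x i = (y i : ℝ) + f y i := by
    intro i
    have := congrFun heq i
    simp only [Pi.add_apply] at this
    exact_mod_cast this
  have h1 := hmin x hx (f y) (hfS y hy)
  have h2 := hmin y hy (f x) (hfS x hx)
  have e1 : ∀ i, ((x i : ℝ) - f y i) ^ 2
      = ((((x i : ℝ) - f x i) + ((y i : ℝ) - f y i)) / 2) ^ 2 := by
    intro i
    have h := heqi i
    have hfy : (f y i : ℝ) = x i + f x i - y i := by linarith
    rw [hfy]; ring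
  have e2 : ∀ i, ((y i : ℝ) - f x i) ^ 2
      = ((((x i : ℝ) - f x i) + ((y i : ℝ) - f y i)) / 2) ^ 2 := by
    intro i
    have h := heqi i
    have hfx : (f x i : ℝ) = y i + f y i - x i := by linarith
    rw [hfx]; ring
  rw [Finset.sum_congr rfl (fun i _ => e1 i)] at h1
  rw [Finset.sum_congr rfl (fun i _ => e2 i)] at h2
  have key : ∑ i, (((x i : ℝ) - f x i) - ((y i : ℝ) - f y i)) ^ 2 ≤ 0 := by
    have expand : ∑ i, (((x i : ℝ) - f x i) - ((y i : ℝ) - f y i)) ^ 2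
        = 2 * ∑ i, ((x i : ℝ) - f x i) ^ 2 + 2 * ∑ i, ((y i : ℝ) - f y i) ^ 2
          - 4 * ∑ i, ((((x i : ℝ) - f x i) + ((y i : ℝ) - f y i)) / 2) ^ 2 := by
      rw [Finset.mul_sum, Finset.mul_sum, Finset.mul_sum, ← Finset.sum_add_distrib,
        ← Finset.sum_sub_distrib]
      exact Finset.sum_congr rfl fun i _ => by ring
    linarith
  have hall : ∀ i ∈ Finset.univ, (((x i : ℝ) - f x i) - ((y i : ℝ) - f y i)) ^ 2 = 0 := by
    intro i _
    have hnn : ∀ j ∈ (Finset.univ : Finset (Fin m)),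
        0 ≤ (((x j : ℝ) - f x j) - ((y j : ℝ) - f y j)) ^ 2 := fun j _ => sq_nonneg _
    have hsum0 : ∑ j, (((x j : ℝ) - f x j) - ((y j : ℝ) - f y j)) ^ 2 = 0 :=
      le_antisymm key (Finset.sum_nonneg hnn)
    exact (Finset.sum_eq_zero_iff_of_nonneg hnn).mp hsum0 i (Finset.mem_univ i)
  funext i
  have h0 := hall i (Finset.mem_univ i)
  have : ((x i : ℝ) - f x i) = ((y i : ℝ) - f y i) := by nlinarith [sq_nonneg (((x i : ℝ) - f x i) - ((y i : ℝ) - f y i))]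
  have := heqi i
  have : (x i : ℝ) = y i := by linarith
  exact_mod_cast this
end

section
/- Let S ⊆ ℤ^{k−1} be finite and nonempty, let x₁ ∉ S with nearest point f(x₁) ∈ S (in Euclidean distance), and let x₂ ∈ ℤ^{k−1} and v ∈ {0,1}^{k−1} satisfy x₁ + f(x₁) = x₂ + (x₂ + v). Then either {x₁, f(x₁)} = {x₂, x₂ + v}, or neither x₂ nor x₂ + v belongs to S. -/
open Finset

lemma aux_prod_nonneg (a w : ℤ) (hw : w = 0 ∨ w = 1) : 0 ≤ a * (a - w) := by
  rcases hw with h | h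
  · simp [h, mul_self_nonneg]
  · subst h
    rcases le_or_gt a 0 with h | h
    · nlinarith
    · exact mul_nonneg (by omega) (by omega)

/-- If `x₁ + f(x₁) = x₂ + (x₂ + v)` with `v` a `0/1` vector and `f(x₁)` a nearest point
of `S` to `x₁ ∉ S`, then either `{x₁, f(x₁)} = {x₂, x₂ + v}` or neither `x₂` nor
`x₂ + v` belongs to `S`. -/
theorem nearest_point_parallelogram (m : ℕ) (S : Finset (Fin m → ℤ))
    (x₁ fx₁ : Fin m → ℤ) (hx₁ : x₁ ∉ S) (hfx₁ : fx₁ ∈ S)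
    (hmin : ∀ s ∈ S,
      ∑ i, ((x₁ i : ℝ) - (fx₁ i : ℝ)) ^ 2 ≤ ∑ i, ((x₁ i : ℝ) - (s i : ℝ)) ^ 2)
    (x₂ v : Fin m → ℤ) (hv : ∀ i, v i = 0 ∨ v i = 1)
    (hsum : x₁ + fx₁ = x₂ + (x₂ + v)) :
    ({x₁, fx₁} : Set (Fin m → ℤ)) = {x₂, x₂ + v} ∨ (x₂ ∉ S ∧ x₂ + v ∉ S) := by
  have hsum' : ∀ i, x₁ i + fx₁ i = x₂ i + (x₂ i + v i) := by
    intro i; exact congrFun hsum i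
  -- key per-coordinate inequality
  have key : ∑ i, (((x₁ i : ℝ) - (x₂ i : ℝ)) ^ 2 + ((x₁ i : ℝ) - ((x₂ i : ℝ) + (v i : ℝ))) ^ 2)
      ≤ ∑ i, ((x₁ i : ℝ) - (fx₁ i : ℝ)) ^ 2 := by
    refine Finset.sum_le_sum fun i _ => ?_
    have h1 : (0 : ℝ) ≤ ((x₁ i : ℝ) - (x₂ i : ℝ)) * (((x₁ i : ℝ) - (x₂ i : ℝ)) - (v i : ℝ)) := by
      exact_mod_cast aux_prod_nonneg (x₁ i - x₂ i) (v i) (hv i)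
    have h2 : (fx₁ i : ℝ) = (x₂ i : ℝ) + (x₂ i : ℝ) + (v i : ℝ) - (x₁ i : ℝ) := by
      have := hsum' i
      push_cast [show fx₁ i = x₂ i + (x₂ i + v i) - x₁ i by omega]
      ring
    rw [h2]; nlinarith [h1]
  have split : ∑ i, (((x₁ i : ℝ) - (x₂ i : ℝ)) ^ 2 + ((x₁ i : ℝ) - ((x₂ i : ℝ) + (v i : ℝ))) ^ 2)
      = (∑ i, ((x₁ i : ℝ) - (x₂ i : ℝ)) ^ 2)
        + ∑ i, ((x₁ i : ℝ) - ((x₂ i : ℝ) + (v i : ℝ))) ^ 2 := Finset.sum_add_distrib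
  by_cases h₂ : x₂ ∈ S
  · -- then x₂ + v = x₁ and x₂ = fx₁
    left
    have hA := hmin x₂ h₂
    have hB : ∑ i, ((x₁ i : ℝ) - ((x₂ i : ℝ) + (v i : ℝ))) ^ 2 ≤ 0 := by
      rw [split] at key; linarith
    have hB0 : ∀ i ∈ Finset.univ, ((x₁ i : ℝ) - ((x₂ i : ℝ) + (v i : ℝ))) ^ 2 = 0 := by
      rw [← Finset.sum_eq_zero_iff_of_nonneg fun i _ => sq_nonneg _]
      exact le_antisymm hB (Finset.sum_nonneg fun i _ => sq_nonneg _)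
    have hx : x₂ + v = x₁ := by
      funext i
      have := hB0 i (Finset.mem_univ i)
      have : ((x₁ i : ℝ)) = (x₂ i : ℝ) + (v i : ℝ) := by
        have h := sub_eq_zero.mp (sq_eq_zero_iff.mp this)
        linarith
      have : (x₁ i : ℤ) = x₂ i + v i := by exact_mod_cast this
      simpa [Pi.add_apply] using this.symm
    have hf : fx₁ = x₂ := by
      funext i
      have h1 := hsum' i
      have h2 : x₂ i + v i = x₁ i := congrFun hx i
      omega
    rw [hx, hf, Set.pair_comm]
  · by_cases h₃ : x₂ + v ∈ S
    · left
      have hA := hmin (x₂ + v) h₃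
      have hA' : ∑ i, ((x₁ i : ℝ) - (fx₁ i : ℝ)) ^ 2
          ≤ ∑ i, ((x₁ i : ℝ) - ((x₂ i : ℝ) + (v i : ℝ))) ^ 2 := by
        convert hA using 2 with i
        push_cast [Pi.add_apply]
        ring
      have hB : ∑ i, ((x₁ i : ℝ) - (x₂ i : ℝ)) ^ 2 ≤ 0 := by
        rw [split] at key; linarith
      have hB0 : ∀ i ∈ Finset.univ, ((x₁ i : ℝ) - (x₂ i : ℝ)) ^ 2 = 0 := by
        rw [← Finset.sum_eq_zero_iff_of_nonneg fun i _ => sq_nonneg _]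
        exact le_antisymm hB (Finset.sum_nonneg fun i _ => sq_nonneg _)
      have hx : x₂ = x₁ := by
        funext i
        have := hB0 i (Finset.mem_univ i)
        have : ((x₁ i : ℝ)) = (x₂ i : ℝ) := by
          have h := sub_eq_zero.mp (sq_eq_zero_iff.mp this)
          linarith
        exact_mod_cast this.symm
      have hf : fx₁ = x₂ + v := by
        funext i
        have h1 := hsum' i
        have h2 : x₂ i = x₁ i := congrFun hx i
        simp only [Pi.add_apply]
        omega
      rw [hx] at hf ⊢
      rw [hf]
    · exact Or.inr ⟨h₂, h₃⟩
end

section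
/- Let (Z_i)_{i ∈ I} be a finite family of finite nonempty subsets of ℤ and ρ ≥ 0 a real number such that |co(Z_i)| ≤ (1 + ρ)|Z_i| for all i, where co(Z_i) is the smallest integer interval containing Z_i. Then |⋃_i co(Z_i)| ≤ (1 + 2ρ)·|⋃_i Z_i|. -/
open Finset

lemma ply2 {I : Type*} [DecidableEq I] (a b : I → ℤ) (t : Finset I) :
    ∃ u ⊆ t, u.biUnion (fun i => Finset.Icc (a i) (b i)) = t.biUnion (fun i => Finset.Icc (a i) (b i)) ∧
      ∀ x : ℤ, (u.filter (fun i => x ∈ Finset.Icc (a i) (b i))).card ≤ 2 := by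
  induction t using Finset.strongInduction with
  | _ t ih =>
    by_cases hp : ∀ x : ℤ, (t.filter (fun i => x ∈ Finset.Icc (a i) (b i))).card ≤ 2
    · exact ⟨t, Finset.Subset.refl _, rfl, hp⟩
    · push_neg at hp
      obtain ⟨x, hx⟩ := hp
      set f := t.filter (fun i => x ∈ Finset.Icc (a i) (b i)) with hf
      have hf3 : 3 ≤ f.card := hx
      have hfne : f.Nonempty := Finset.card_pos.mp (by omega)
      obtain ⟨j1, hj1, hj1max⟩ := f.exists_max_image b hfne
      obtain ⟨j2, hj2, hj2min⟩ := f.exists_min_image a hfne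
      have hex : ∃ k ∈ f, k ≠ j1 ∧ k ≠ j2 := by
        by_contra hc
        push_neg at hc
        have hsub : f ⊆ {j1, j2} := by
          intro y hy
          rcases eq_or_ne y j1 with rfl | h1
          · simp
          · have := hc y hy h1
            simp [this]
        have := Finset.card_le_card hsub
        have : ({j1, j2} : Finset I).card ≤ 2 := Finset.card_insert_le _ _ |>.trans (by simp)
        omega
      obtain ⟨k, hk, hk1, hk2⟩ := hex
      have hkt : k ∈ t := Finset.mem_filter.mp hk |>.1
      have hxk : x ∈ Finset.Icc (a k) (b k) := Finset.mem_filter.mp hk |>.2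
      have hxj1 : x ∈ Finset.Icc (a j1) (b j1) := Finset.mem_filter.mp hj1 |>.2
      have hxj2 : x ∈ Finset.Icc (a j2) (b j2) := Finset.mem_filter.mp hj2 |>.2
      have hksub : Finset.Icc (a k) (b k) ⊆ Finset.Icc (a j2) (b j2) ∪ Finset.Icc (a j1) (b j1) := by
        intro y hy
        simp only [Finset.mem_Icc, Finset.mem_union] at *
        rcases le_total y x with hyx | hxy
        · left; exact ⟨le_trans (hj2min k hk) hy.1, le_trans hyx hxj2.2⟩
        · right; exact ⟨le_trans hxj1.1 hxy, le_trans hy.2 (hj1max k hk)⟩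
      have herase : (t.erase k).biUnion (fun i => Finset.Icc (a i) (b i))
          = t.biUnion (fun i => Finset.Icc (a i) (b i)) := by
        apply Finset.Subset.antisymm
        · exact Finset.biUnion_subset_biUnion_of_subset_left _ (Finset.erase_subset _ _)
        · apply Finset.biUnion_subset.mpr
          intro i hi
          rcases eq_or_ne i k with rfl | hik
          · intro y hy
            rcases Finset.mem_union.mp (hksub hy) with h' | h'
            · exact Finset.mem_biUnion.mpr ⟨j2, Finset.mem_erase.mpr ⟨fun hh => hk2 hh.symm, Finset.mem_filter.mp hj2 |>.1⟩, h'⟩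
            · exact Finset.mem_biUnion.mpr ⟨j1, Finset.mem_erase.mpr ⟨fun hh => hk1 hh.symm, Finset.mem_filter.mp hj1 |>.1⟩, h'⟩
          · exact fun y hy => Finset.mem_biUnion.mpr ⟨i, Finset.mem_erase.mpr ⟨hik, hi⟩, hy⟩
      obtain ⟨u, hut, hueq, hply⟩ := ih (t.erase k) (Finset.erase_ssubset hkt)
      exact ⟨u, hut.trans (Finset.erase_subset _ _), hueq.trans herase, hply⟩



/-- If each finite nonempty `Zᵢ ⊆ ℤ` satisfies `|co(Zᵢ)| ≤ (1+ρ)|Zᵢ|`, then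
`|⋃ co(Zᵢ)| ≤ (1+2ρ)|⋃ Zᵢ|`, where `co(Z)` is the integer interval `[min Z, max Z]`. -/
theorem union_interval_hulls {I : Type*} [Fintype I] (Z : I → Finset ℤ)
    (hZ : ∀ i, (Z i).Nonempty) (ρ : ℝ) (hρ : 0 ≤ ρ)
    (h : ∀ i, ((Finset.Icc ((Z i).min' (hZ i)) ((Z i).max' (hZ i))).card : ℝ)
      ≤ (1 + ρ) * (Z i).card) :
    ((Finset.univ.biUnion fun i => Finset.Icc ((Z i).min' (hZ i)) ((Z i).max' (hZ i))).card : ℝ)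
      ≤ (1 + 2 * ρ) * ((Finset.univ.biUnion Z).card : ℝ) := by
  classical
  set co : I → Finset ℤ := fun i => Finset.Icc ((Z i).min' (hZ i)) ((Z i).max' (hZ i)) with hco
  set U : Finset ℤ := Finset.univ.biUnion Z with hU
  set H : Finset ℤ := Finset.univ.biUnion co with hH
  have hZco : ∀ i, Z i ⊆ co i := by
    intro i z hz
    exact Finset.mem_Icc.mpr ⟨Finset.min'_le _ _ hz, Finset.le_max' _ _ hz⟩
  have hZU : ∀ i, Z i ⊆ U := fun i => Finset.subset_biUnion_of_mem Z (Finset.mem_univ i)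
  obtain ⟨u, hu, hueq, hply⟩ := ply2 (fun i => (Z i).min' (hZ i)) (fun i => (Z i).max' (hZ i))
    Finset.univ
  -- card H ≤ card U + card (H \ U)
  have h1 : H.card ≤ U.card + (H \ U).card := by
    have : H ⊆ U ∪ (H \ U) := by
      intro x hx
      by_cases hxU : x ∈ U
      · exact Finset.mem_union_left _ hxU
      · exact Finset.mem_union_right _ (Finset.mem_sdiff.mpr ⟨hx, hxU⟩)
    calc H.card ≤ (U ∪ (H \ U)).card := Finset.card_le_card this
      _ ≤ U.card + (H \ U).card := Finset.card_union_le _ _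
  -- card (H \ U) ≤ ∑ i in u, ((co i).card - (Z i).card)
  have h2 : (H \ U).card ≤ ∑ i ∈ u, ((co i).card - (Z i).card) := by
    have hsub : H \ U ⊆ u.biUnion (fun i => co i \ U) := by
      intro x hx
      obtain ⟨hxH, hxU⟩ := Finset.mem_sdiff.mp hx
      rw [hH, ← hueq] at hxH
      obtain ⟨i, hi, hxi⟩ := Finset.mem_biUnion.mp hxH
      exact Finset.mem_biUnion.mpr ⟨i, hi, Finset.mem_sdiff.mpr ⟨hxi, hxU⟩⟩
    calc (H \ U).card ≤ (u.biUnion (fun i => co i \ U)).card := Finset.card_le_card hsub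
      _ ≤ ∑ i ∈ u, (co i \ U).card := Finset.card_biUnion_le
      _ ≤ ∑ i ∈ u, ((co i).card - (Z i).card) := by
          apply Finset.sum_le_sum
          intro i _
          have : co i \ U ⊆ co i \ Z i := Finset.sdiff_subset_sdiff (Finset.Subset.refl _) (hZU i)
          calc (co i \ U).card ≤ (co i \ Z i).card := Finset.card_le_card this
            _ = (co i).card - (Z i).card := Finset.card_sdiff_of_subset (hZco i)
  -- ∑ i in u, (Z i).card ≤ 2 * U.card
  have h3 : ∑ i ∈ u, (Z i).card ≤ 2 * U.card := by
    have key : ∀ i ∈ u, (Z i).card = (U.filter (fun x => x ∈ Z i)).card := by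
      intro i _
      congr 1
      rw [Finset.filter_mem_eq_inter, Finset.inter_eq_right.mpr (hZU i)]
    calc ∑ i ∈ u, (Z i).card = ∑ i ∈ u, (U.filter (fun x => x ∈ Z i)).card :=
          Finset.sum_congr rfl key
      _ = ∑ i ∈ u, ∑ x ∈ U, (if x ∈ Z i then 1 else 0) := by
          apply Finset.sum_congr rfl; intro i _; rw [Finset.card_filter]
      _ = ∑ x ∈ U, ∑ i ∈ u, (if x ∈ Z i then 1 else 0) := Finset.sum_comm
      _ ≤ ∑ x ∈ U, 2 := by
          apply Finset.sum_le_sum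
          intro x _
          calc ∑ i ∈ u, (if x ∈ Z i then 1 else 0)
              ≤ ∑ i ∈ u, (if x ∈ co i then 1 else 0) := by
                apply Finset.sum_le_sum
                intro i _
                by_cases hxz : x ∈ Z i
                · simp [hxz, hZco i hxz]
                · simp only [hxz, if_false]; split <;> omega
            _ = (u.filter (fun i => x ∈ co i)).card := (Finset.card_filter _ _).symm
            _ ≤ 2 := hply x
      _ = 2 * U.card := by rw [Finset.sum_const, smul_eq_mul, mul_comm]
  -- put it together over ℝ
  have hcast : ∀ i ∈ u, (((co i).card - (Z i).card : ℕ) : ℝ) ≤ ρ * (Z i).card := by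
    intro i _
    have hle : (Z i).card ≤ (co i).card := Finset.card_le_card (hZco i)
    rw [Nat.cast_sub hle]
    have := h i
    rw [hco]
    push_cast
    nlinarith [this]
  have h2' : ((H \ U).card : ℝ) ≤ ρ * ∑ i ∈ u, ((Z i).card : ℝ) := by
    calc ((H \ U).card : ℝ) ≤ ((∑ i ∈ u, ((co i).card - (Z i).card) : ℕ) : ℝ) := by
          exact_mod_cast h2
      _ = ∑ i ∈ u, (((co i).card - (Z i).card : ℕ) : ℝ) := by push_cast; ring_nf
      _ ≤ ∑ i ∈ u, ρ * ((Z i).card : ℝ) := Finset.sum_le_sum hcast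
      _ = ρ * ∑ i ∈ u, ((Z i).card : ℝ) := by rw [Finset.mul_sum]
  have h3' : (∑ i ∈ u, ((Z i).card : ℝ)) ≤ 2 * U.card := by exact_mod_cast h3
  have h1' : (H.card : ℝ) ≤ U.card + ((H \ U).card : ℝ) := by exact_mod_cast h1
  have := mul_le_mul_of_nonneg_left h3' hρ
  calc (H.card : ℝ) ≤ U.card + ((H \ U).card : ℝ) := h1'
    _ ≤ U.card + ρ * ∑ i ∈ u, ((Z i).card : ℝ) := by linarith
    _ ≤ U.card + ρ * (2 * U.card) := by linarith
    _ = (1 + 2 * ρ) * U.card := by ring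
end

section
/- Let A ⊆ B = {1,...,n₁} × ... × {1,...,n_k} ⊆ ℤ^k with |A| ≥ ε₀|B|, suppose A is reduced (i.e., the affine sublattice generated by A is all of ℤ^k), suppose d_k(A) ≤ δ|B|, and let A' ⊆ B satisfy |A Δ A'| ≤ 2^{−(k+1)}ε₀|B|. Then, provided δ + 2^{2k}(min_i n_i)^{-1} < (1/2 − 2^{−(k+1)})ε₀, the set A' is also reduced. -/
open Finset Pointwise

private lemma cd_int {s t : Finset ℤ} (hs : s.Nonempty) (ht : t.Nonempty) :
    s.card + t.card - 1 ≤ (s + t).card :=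
  cauchy_davenport_add_of_linearOrder_isCancelAdd hs ht

private lemma step_lemma {G : Type*} [AddCommGroup G] [DecidableEq G]
    (n c e : ℕ) (X : Finset (G × ℤ))
    (hX : ∀ x ∈ X, 1 ≤ x.2 ∧ x.2 ≤ (n : ℤ))
    (hY : ∀ Y : Finset G, Y ⊆ X.image Prod.fst → c * Y.card ≤ (Y + Y).card + e) :
    2 * c * X.card ≤ (X + X).card + c * (X.image Prod.fst).card + 2 * n * e := by
  classical
  set Y := X.image Prod.fst with hYdef
  set fib : G → Finset ℤ := fun y => (X.filter (fun x => x.1 = y)).image Prod.snd with hfib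
  set m : G → ℕ := fun y => (fib y).card with hm
  have hfib_mem : ∀ y s, s ∈ fib y ↔ (y, s) ∈ X := by
    intro y s
    simp only [hfib, mem_image, mem_filter]
    constructor
    · rintro ⟨⟨a, b⟩, ⟨hx, rfl⟩, rfl⟩; exact hx
    · intro h; exact ⟨(y, s), ⟨h, rfl⟩, rfl⟩
  have hfib_card : ∀ y, (X.filter (fun x => x.1 = y)).card = m y := by
    intro y
    rw [hm, hfib]
    refine (Finset.card_image_of_injOn ?_).symm
    rintro ⟨a, b⟩ ha ⟨a', b'⟩ hb hsnd
    simp only [coe_filter, Set.mem_setOf_eq] at ha hb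
    simp only at hsnd
    simp [Prod.ext_iff, ha.2, hb.2, hsnd]
  have hcardX : X.card = ∑ y ∈ Y, m y := by
    rw [Finset.card_eq_sum_card_fiberwise (f := Prod.fst) (t := Y)
      (fun x hx => mem_image_of_mem _ hx)]
    exact Finset.sum_congr rfl fun y _ => hfib_card y
  have hmn : ∀ y ∈ Y, 1 ≤ m y ∧ m y ≤ n := by
    intro y hy
    obtain ⟨x, hxX, rfl⟩ := mem_image.1 hy
    constructor
    · have hx2 : x.2 ∈ fib x.1 := (hfib_mem _ _).2 (by simpa using hxX)
      exact Finset.card_pos.2 ⟨x.2, hx2⟩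
    · have hsub : fib x.1 ⊆ Finset.Icc 1 (n : ℤ) := by
        intro s hs
        have := hX _ ((hfib_mem _ _).1 hs)
        simpa [Finset.mem_Icc] using this
      calc m x.1 ≤ (Finset.Icc (1 : ℤ) n).card := card_le_card hsub
        _ = n := by rw [Int.card_Icc]; omega
  set Yt : ℕ → Finset G := fun t => Y.filter (fun y => t ≤ m y) with hYt
  have hsumYt : ∑ t ∈ Finset.Icc 1 n, (Yt t).card = X.card := by
    rw [hcardX]
    have hc : ∀ t, (Yt t).card = ∑ y ∈ Y, if t ≤ m y then 1 else 0 := by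
      intro t; rw [hYt, Finset.card_filter]
    simp_rw [hc]
    rw [Finset.sum_comm]
    refine Finset.sum_congr rfl fun y hy => ?_
    rw [← Finset.card_filter]
    have hfilter : (Finset.Icc 1 n).filter (fun t => t ≤ m y) = Finset.Icc 1 (m y) := by
      ext t
      simp only [mem_filter, Finset.mem_Icc]
      have := (hmn y hy).2
      omega
    rw [hfilter, Nat.card_Icc]; omega
  have key : ∀ (u t : ℕ) (y y' : G), 1 ≤ u → 1 ≤ t → y ∈ Yt u → y' ∈ Yt t →
      u + t - 1 ≤ ((X + X).filter (fun p => p.1 = y + y')).card := by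
    intro u t y y' hu ht hyu hyt
    have hy : u ≤ m y := (mem_filter.1 hyu).2
    have hy' : t ≤ m y' := (mem_filter.1 hyt).2
    have hne : (fib y).Nonempty := card_pos.1 (show 0 < m y by omega)
    have hne' : (fib y').Nonempty := card_pos.1 (show 0 < m y' by omega)
    have hcd : m y + m y' - 1 ≤ (fib y + fib y').card := cd_int hne hne'
    have hsub : (fib y + fib y').image (fun s => ((y + y', s) : G × ℤ))
        ⊆ (X + X).filter (fun p => p.1 = y + y') := by
      intro p hp
      simp only [mem_image] at hp
      obtain ⟨s, hs, rfl⟩ := hp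
      obtain ⟨s₁, hs₁, s₂, hs₂, rfl⟩ := Finset.mem_add.1 hs
      refine mem_filter.2 ⟨?_, rfl⟩
      have h1 : (y, s₁) ∈ X := (hfib_mem _ _).1 hs₁
      have h2 : (y', s₂) ∈ X := (hfib_mem _ _).1 hs₂
      exact Finset.add_mem_add h1 h2
    have hinj : ((fib y + fib y').image (fun s => ((y + y', s) : G × ℤ))).card
        = (fib y + fib y').card :=
      Finset.card_image_of_injective _ (fun a b h => by
        simpa [Prod.ext_iff] using h)
    calc u + t - 1 ≤ m y + m y' - 1 := by omega
      _ ≤ (fib y + fib y').card := hcd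
      _ = _ := hinj.symm
      _ ≤ _ := card_le_card hsub
  have hperz : ∀ z : G,
      (∑ t ∈ Finset.Icc 1 n, ((if z ∈ Yt t + Yt t then 1 else 0)
        + (if z ∈ Yt (t + 1) + Yt t then 1 else 0)))
      ≤ ((X + X).filter (fun p => p.1 = z)).card := by
    intro z
    set F := ((X + X).filter (fun p => p.1 = z)).card with hF
    set S1 := (Finset.Icc 1 n).filter (fun t => z ∈ Yt t + Yt t) with hS1
    set S2 := (Finset.Icc 1 n).filter (fun t => z ∈ Yt (t + 1) + Yt t) with hS2
    have hsum : (∑ t ∈ Finset.Icc 1 n, ((if z ∈ Yt t + Yt t then 1 else 0)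
        + (if z ∈ Yt (t + 1) + Yt t then 1 else 0))) = S1.card + S2.card := by
      rw [Finset.sum_add_distrib, hS1, hS2, Finset.card_filter, Finset.card_filter]
    rw [hsum]
    have hT : (S1.image (fun t => 2 * t) ∪ S2.image (fun t => 2 * t + 1)).card
        = S1.card + S2.card := by
      rw [Finset.card_union_of_disjoint, Finset.card_image_of_injective _ (fun a b h => by omega),
        Finset.card_image_of_injective _ (fun a b h => by omega)]
      rw [Finset.disjoint_left]
      intro u hu1 hu2
      simp only [mem_image] at hu1 hu2
      obtain ⟨t1, _, h1⟩ := hu1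
      obtain ⟨t2, _, h2⟩ := hu2
      omega
    have hsubT : S1.image (fun t => 2 * t) ∪ S2.image (fun t => 2 * t + 1)
        ⊆ Finset.Icc 2 (F + 1) := by
      intro u hu
      rcases mem_union.1 hu with hu | hu
      · obtain ⟨t, ht, rfl⟩ := mem_image.1 hu
        have ht1 : 1 ≤ t := (Finset.mem_Icc.1 (mem_filter.1 ht).1).1
        obtain ⟨y, hy, y', hy', rfl⟩ := Finset.mem_add.1 (mem_filter.1 ht).2
        have := key t t y y' ht1 ht1 hy hy'
        rw [Finset.mem_Icc]
        omega
      · obtain ⟨t, ht, rfl⟩ := mem_image.1 hu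
        have ht1 : 1 ≤ t := (Finset.mem_Icc.1 (mem_filter.1 ht).1).1
        obtain ⟨y, hy, y', hy', rfl⟩ := Finset.mem_add.1 (mem_filter.1 ht).2
        have := key (t + 1) t y y' (by omega) ht1 hy hy'
        rw [Finset.mem_Icc]
        omega
    calc S1.card + S2.card = _ := hT.symm
      _ ≤ (Finset.Icc 2 (F + 1)).card := card_le_card hsubT
      _ = F := by rw [Nat.card_Icc]; omega
  have himg : (X + X).image Prod.fst = Y + Y := by
    have h := Finset.image_add (AddMonoidHom.fst G ℤ) (s := X) (t := X)
    simpa using h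
  have hXXge : ∑ t ∈ Finset.Icc 1 n, ((Yt t + Yt t).card + (Yt (t + 1) + Yt t).card)
      ≤ (X + X).card := by
    have hdecomp : (X + X).card = ∑ z ∈ Y + Y, ((X + X).filter (fun p => p.1 = z)).card := by
      rw [← himg]
      exact Finset.card_eq_sum_card_fiberwise (fun x hx => mem_image_of_mem _ hx)
    rw [hdecomp]
    have hcards : ∀ t ∈ Finset.Icc 1 n,
        (Yt t + Yt t).card + (Yt (t + 1) + Yt t).card
        = ∑ z ∈ Y + Y, ((if z ∈ Yt t + Yt t then 1 else 0)
          + (if z ∈ Yt (t + 1) + Yt t then 1 else 0)) := by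
      intro t _
      rw [Finset.sum_add_distrib, ← Finset.card_filter, ← Finset.card_filter]
      congr 1
      · rw [Finset.filter_mem_eq_inter, Finset.inter_eq_right.2
          (Finset.add_subset_add (filter_subset _ _) (filter_subset _ _))]
      · rw [Finset.filter_mem_eq_inter, Finset.inter_eq_right.2
          (Finset.add_subset_add (filter_subset _ _) (filter_subset _ _))]
    rw [Finset.sum_congr rfl hcards, Finset.sum_comm]
    exact Finset.sum_le_sum fun z _ => hperz z
  have hYtmono : ∀ t, Yt (t + 1) ⊆ Yt t := by
    intro t y hy
    rw [hYt, mem_filter] at hy ⊢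
    exact ⟨hy.1, by omega⟩
  have hA : ∀ t ∈ Finset.Icc 1 n, c * (Yt t).card ≤ (Yt t + Yt t).card + e :=
    fun t _ => hY _ (filter_subset _ _)
  have hB : ∀ t ∈ Finset.Icc 1 n, c * (Yt (t + 1)).card ≤ (Yt (t + 1) + Yt t).card + e := by
    intro t _
    calc c * (Yt (t + 1)).card ≤ (Yt (t + 1) + Yt (t + 1)).card + e := hY _ (filter_subset _ _)
      _ ≤ (Yt (t + 1) + Yt t).card + e := by
        gcongr
        exact hYtmono t
  have hshift : X.card ≤ (∑ t ∈ Finset.Icc 1 n, (Yt (t + 1)).card) + (Yt 1).card := by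
    rcases Nat.eq_zero_or_pos n with hn | hn
    · have hXe : X = ∅ := by
        rw [Finset.eq_empty_iff_forall_notMem]
        intro x hx
        have := hX x hx
        subst hn
        simp at this
        omega
      simp [hXe]
    · have h1 : ∑ t ∈ Finset.Icc 1 n, (Yt (t + 1)).card
          = ∑ t ∈ Finset.Icc 2 (n + 1), (Yt t).card := by
        rw [show Finset.Icc 2 (n + 1) = (Finset.Icc 1 n).image (· + 1) by
          rw [Finset.image_add_right_Icc]]
        rw [Finset.sum_image (fun a _ b _ h => by omega)]
      rw [h1]
      have h2 : ∑ t ∈ Finset.Icc 2 n, (Yt t).card ≤ ∑ t ∈ Finset.Icc 2 (n + 1), (Yt t).card :=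
        Finset.sum_le_sum_of_subset (Finset.Icc_subset_Icc_right (by omega))
      have h3 : Finset.Icc 1 n = insert 1 (Finset.Icc 2 n) := by
        ext t
        simp only [Finset.mem_Icc, Finset.mem_insert]
        omega
      have h4 : (1 : ℕ) ∉ Finset.Icc 2 n := by simp
      rw [← hsumYt, h3, Finset.sum_insert h4]
      omega
  have hfin1 : c * X.card ≤ (∑ t ∈ Finset.Icc 1 n, (Yt t + Yt t).card) + n * e := by
    calc c * X.card = ∑ t ∈ Finset.Icc 1 n, c * (Yt t).card := by
          rw [← hsumYt, Finset.mul_sum]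
      _ ≤ ∑ t ∈ Finset.Icc 1 n, ((Yt t + Yt t).card + e) := Finset.sum_le_sum hA
      _ = _ := by rw [Finset.sum_add_distrib, Finset.sum_const, Nat.card_Icc, Nat.add_sub_cancel, smul_eq_mul]
  have hfin2 : c * X.card ≤ (∑ t ∈ Finset.Icc 1 n, (Yt (t + 1) + Yt t).card) + n * e
      + c * (Yt 1).card := by
    calc c * X.card ≤ c * ((∑ t ∈ Finset.Icc 1 n, (Yt (t + 1)).card) + (Yt 1).card) :=
          Nat.mul_le_mul_left c hshift
      _ = (∑ t ∈ Finset.Icc 1 n, c * (Yt (t + 1)).card) + c * (Yt 1).card := by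
          rw [Nat.mul_add, Finset.mul_sum]
      _ ≤ (∑ t ∈ Finset.Icc 1 n, ((Yt (t + 1) + Yt t).card + e)) + c * (Yt 1).card :=
          Nat.add_le_add_right (Finset.sum_le_sum hB) _
      _ = _ := by rw [Finset.sum_add_distrib, Finset.sum_const, Nat.card_Icc, Nat.add_sub_cancel, smul_eq_mul]
  have hY1 : (Yt 1).card ≤ Y.card := card_le_card (filter_subset _ _)
  have hsplit : (∑ t ∈ Finset.Icc 1 n, (Yt t + Yt t).card)
      + (∑ t ∈ Finset.Icc 1 n, (Yt (t + 1) + Yt t).card)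
      = ∑ t ∈ Finset.Icc 1 n, ((Yt t + Yt t).card + (Yt (t + 1) + Yt t).card) := by
    rw [Finset.sum_add_distrib]
  have hcY : c * (Yt 1).card ≤ c * Y.card := Nat.mul_le_mul_left c hY1
  have hgoal : 2 * c * X.card = c * X.card + c * X.card := by ring
  rw [hgoal]
  linarith [hfin1, hfin2, hXXge, hcY, hsplit]

private def lastHom (k : ℕ) : (Fin (k + 1) → ℤ) →+ (Fin k → ℤ) × ℤ where
  toFun x := (fun i => x i.castSucc, x (Fin.last k))
  map_zero' := rfl
  map_add' _ _ := rfl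

private lemma lastHom_injective (k : ℕ) : Function.Injective (lastHom k) := by
  intro x y h
  funext i
  induction i using Fin.lastCases with
  | last => exact congrArg Prod.snd h
  | cast i => exact congrFun (congrArg Prod.fst h) i

private lemma card_le_box {k : ℕ} (n : Fin k → ℕ) (Z : Finset (Fin k → ℤ))
    (hZ : ∀ x ∈ Z, ∀ i, 1 ≤ x i ∧ x i ≤ (n i : ℤ)) : Z.card ≤ ∏ i, n i := by
  classical
  have hsub : Z ⊆ Finset.Icc (fun _ => 1) (fun i => (n i : ℤ)) := by
    intro x hx
    simp only [Finset.mem_Icc, Pi.le_def]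
    exact ⟨fun i => (hZ x hx i).1, fun i => (hZ x hx i).2⟩
  calc Z.card ≤ _ := card_le_card hsub
    _ = ∏ i, (Finset.Icc (1 : ℤ) (n i)).card := Pi.card_Icc _ _
    _ = ∏ i, n i := by
      refine Finset.prod_congr rfl fun i _ => ?_
      rw [Int.card_Icc]
      omega

private lemma erase_last_eq (k : ℕ) :
    (Finset.univ : Finset (Fin (k + 1))).erase (Fin.last k)
      = Finset.univ.image Fin.castSucc := by
  ext a
  simp only [Finset.mem_erase, Finset.mem_univ, and_true, Finset.mem_image, true_and]
  constructor
  · intro h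
    exact ⟨a.castPred h, by simp⟩
  · rintro ⟨b, rfl⟩
    exact (Fin.castSucc_lt_last b).ne

private lemma erase_castSucc_eq (k : ℕ) (i : Fin k) :
    (Finset.univ : Finset (Fin (k + 1))).erase i.castSucc
      = insert (Fin.last k) ((Finset.univ.erase i).image Fin.castSucc) := by
  ext a
  simp only [Finset.mem_erase, Finset.mem_univ, and_true, Finset.mem_insert, Finset.mem_image,
    true_and]
  constructor
  · intro h
    rcases eq_or_ne a (Fin.last k) with rfl | hne
    · exact Or.inl rfl
    · refine Or.inr ⟨a.castPred hne, ⟨?_, by simp⟩⟩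
      intro hcontra
      exact h (by rw [← hcontra]; simp)
  · rintro (rfl | ⟨b, ⟨hb, rfl⟩⟩)
    · exact (Fin.castSucc_lt_last i).ne'
    · exact fun hc => hb (Fin.castSucc_injective k hc)

private lemma prod_erase_last (k : ℕ) (n : Fin (k + 1) → ℕ) :
    ∏ j ∈ Finset.univ.erase (Fin.last k), n j = ∏ j : Fin k, n j.castSucc := by
  rw [erase_last_eq, Finset.prod_image (fun a _ b _ h => Fin.castSucc_injective k h)]

private lemma prod_erase_castSucc (k : ℕ) (n : Fin (k + 1) → ℕ) (i : Fin k) :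
    ∏ j ∈ Finset.univ.erase i.castSucc, n j
      = n (Fin.last k) * ∏ j ∈ Finset.univ.erase i, n j.castSucc := by
  rw [erase_castSucc_eq, Finset.prod_insert (by
    simp only [Finset.mem_image]
    rintro ⟨b, _, hb⟩
    exact (Fin.castSucc_lt_last b).ne hb),
    Finset.prod_image (fun a _ b _ h => Fin.castSucc_injective k h)]

private lemma box_sumset : ∀ (k : ℕ) (n : Fin k → ℕ) (X : Finset (Fin k → ℤ)),
    (∀ x ∈ X, ∀ i, 1 ≤ x i ∧ x i ≤ (n i : ℤ)) →
    2 ^ k * X.card ≤ (X + X).card + 2 ^ k * ∑ i, ∏ j ∈ Finset.univ.erase i, n j := by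
  intro k
  induction k with
  | zero =>
    intro n X hX
    rcases X.eq_empty_or_nonempty with rfl | ⟨x, hx⟩
    · simp
    · have h1 : X.card ≤ 1 := by
        refine Finset.card_le_one.2 fun a ha b hb => ?_
        funext i
        exact absurd i.2 (by omega)
      have h2 : 1 ≤ (X + X).card := Finset.card_pos.2 ⟨x + x, Finset.add_mem_add hx hx⟩
      simpa using h1.trans h2
  | succ k ih =>
    intro n X hX
    classical
    set φ := lastHom k with hφ
    set X' := X.image φ with hX'
    have hcard : X'.card = X.card := Finset.card_image_of_injective _ (lastHom_injective k)
    have hcardsum : (X' + X').card = (X + X).card := by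
      rw [hX', ← Finset.image_add]
      exact Finset.card_image_of_injective _ (lastHom_injective k)
    have hbox2 : ∀ x ∈ X', 1 ≤ x.2 ∧ x.2 ≤ (n (Fin.last k) : ℤ) := by
      rintro x hx
      obtain ⟨x₀, hx₀, rfl⟩ := Finset.mem_image.1 hx
      exact hX x₀ hx₀ (Fin.last k)
    have hproj : ∀ y ∈ X'.image Prod.fst, ∀ i : Fin k, 1 ≤ y i ∧ y i ≤ (n i.castSucc : ℤ) := by
      intro y hy i
      obtain ⟨x, hx, rfl⟩ := Finset.mem_image.1 hy
      obtain ⟨x₀, hx₀, rfl⟩ := Finset.mem_image.1 hx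
      exact hX x₀ hx₀ i.castSucc
    have hIH : ∀ Y : Finset (Fin k → ℤ), Y ⊆ X'.image Prod.fst →
        2 ^ k * Y.card ≤ (Y + Y).card
          + 2 ^ k * ∑ i : Fin k, ∏ j ∈ Finset.univ.erase i, n j.castSucc := by
      intro Y hYsub
      exact ih (fun i => n i.castSucc) Y (fun y hy i => hproj y (hYsub hy) i)
    have hstep := step_lemma (n (Fin.last k)) (2 ^ k)
      (2 ^ k * ∑ i : Fin k, ∏ j ∈ Finset.univ.erase i, n j.castSucc) X' hbox2 hIH
    have hYcard : (X'.image Prod.fst).card ≤ ∏ i : Fin k, n i.castSucc :=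
      card_le_box _ _ (fun y hy i => hproj y hy i)
    rw [hcard, hcardsum] at hstep
    -- now pure arithmetic
    have hsum_expand : ∑ i : Fin (k + 1), ∏ j ∈ Finset.univ.erase i, n j
        = (∑ i : Fin k, ∏ j ∈ Finset.univ.erase i.castSucc, n j)
          + ∏ j ∈ Finset.univ.erase (Fin.last k), n j := Fin.sum_univ_castSucc _
    have hterm : ∀ i : Fin k, ∏ j ∈ Finset.univ.erase i.castSucc, n j
        = n (Fin.last k) * ∏ j ∈ Finset.univ.erase i, n j.castSucc := prod_erase_castSucc k n
    have h2 : 2 ^ (k + 1) * ∑ i : Fin (k + 1), ∏ j ∈ Finset.univ.erase i, n j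
        = 2 * n (Fin.last k) * (2 ^ k * ∑ i : Fin k, ∏ j ∈ Finset.univ.erase i, n j.castSucc)
          + 2 ^ (k + 1) * ∏ j : Fin k, n j.castSucc := by
      rw [hsum_expand, Finset.sum_congr rfl (fun i _ => hterm i), ← Finset.mul_sum,
        prod_erase_last, pow_succ]
      ring
    have h3 : 2 ^ k * (X'.image Prod.fst).card ≤ 2 ^ (k + 1) * ∏ j : Fin k, n j.castSucc := by
      calc 2 ^ k * (X'.image Prod.fst).card ≤ 2 ^ k * ∏ i : Fin k, n i.castSucc :=
            Nat.mul_le_mul_left _ hYcard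
        _ ≤ 2 ^ (k + 1) * ∏ j : Fin k, n j.castSucc :=
            Nat.mul_le_mul_right _ (Nat.pow_le_pow_right (by omega) (by omega))
    calc 2 ^ (k + 1) * X.card = 2 * 2 ^ k * X.card := by ring
      _ ≤ (X + X).card + 2 ^ k * (X'.image Prod.fst).card
          + 2 * n (Fin.last k) * (2 ^ k * ∑ i : Fin k, ∏ j ∈ Finset.univ.erase i, n j.castSucc) := hstep
      _ ≤ (X + X).card + 2 ^ (k + 1) * (∏ j : Fin k, n j.castSucc)
          + 2 * n (Fin.last k) * (2 ^ k * ∑ i : Fin k, ∏ j ∈ Finset.univ.erase i, n j.castSucc) := by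
          exact Nat.add_le_add_right (Nat.add_le_add_left h3 _) _
      _ = (X + X).card + 2 ^ (k + 1) * ∑ i : Fin (k + 1), ∏ j ∈ Finset.univ.erase i, n j := by
          rw [h2]; ring

private lemma closure_sub_mono {G : Type*} [AddCommGroup G] (S : Set G) (a b : G) (ha : a ∈ S) :
    AddSubgroup.closure ((fun x => x - a) '' S) ≤ AddSubgroup.closure ((fun x => x - b) '' S) := by
  rw [AddSubgroup.closure_le]
  rintro _ ⟨x, hx, rfl⟩
  have h1 : x - b ∈ AddSubgroup.closure ((fun x => x - b) '' S) :=
    AddSubgroup.subset_closure ⟨x, hx, rfl⟩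
  have h2 : a - b ∈ AddSubgroup.closure ((fun x => x - b) '' S) :=
    AddSubgroup.subset_closure ⟨a, ha, rfl⟩
  have h3 : x - a = (x - b) - (a - b) := by abel
  show x - a ∈ (AddSubgroup.closure ((fun x => x - b) '' S) : Set G)
  rw [SetLike.mem_coe, h3]
  exact sub_mem h1 h2

/-- A finite set `A ⊆ ℤ^k` is reduced if the affine sublattice it spans is all of `ℤ^k`. -/
def ReducedSet {k : ℕ} (A : Finset (Fin k → ℤ)) : Prop :=
  ∃ a ∈ A, AddSubgroup.closure ((fun x => x - a) '' (A : Set (Fin k → ℤ))) = ⊤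

set_option maxHeartbeats 1000000 in
/-- If `A ⊆ B` is reduced with `|A| ≥ ε₀|B|`, `d_k(A) ≤ δ|B|`, and
`|A Δ A'| ≤ 2^{-(k+1)} ε₀ |B|`, then provided
`δ + 2^{2k} (min nᵢ)⁻¹ < (1/2 - 2^{-(k+1)}) ε₀`, the set `A'` is also reduced. -/
theorem close_to_reduced_is_reduced (k : ℕ) (hk : 0 < k) (n : Fin k → ℕ) (ε₀ δ : ℝ)
    (A A' : Finset (Fin k → ℤ))
    (hAbox : ∀ a ∈ A, ∀ i, 1 ≤ a i ∧ a i ≤ (n i : ℤ))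
    (hA'box : ∀ a ∈ A', ∀ i, 1 ≤ a i ∧ a i ≤ (n i : ℤ))
    (hred : ReducedSet A)
    (hsize : ε₀ * ∏ i, (n i : ℝ) ≤ A.card)
    (hdk : ((A + A).card : ℝ) - 2 ^ k * A.card ≤ δ * ∏ i, (n i : ℝ))
    (hsymm : ((symmDiff A A').card : ℝ) ≤ ε₀ / 2 ^ (k + 1) * ∏ i, (n i : ℝ))
    (hproviso : δ + 2 ^ (2 * k) / ((⨅ i, n i : ℕ) : ℝ) < (1 / 2 - 1 / 2 ^ (k + 1)) * ε₀) :
    ReducedSet A' := by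
  classical
  by_contra hnotred
  obtain ⟨a₁, ha₁A, hcl⟩ := hred
  have hn1 : ∀ i, 1 ≤ n i := by
    intro i
    have := (hAbox a₁ ha₁A i).1.trans (hAbox a₁ ha₁A i).2
    exact_mod_cast this
  set P : ℝ := ∏ i, (n i : ℝ) with hPdef
  have hPprod : P = ((∏ i, n i : ℕ) : ℝ) := by rw [Nat.cast_prod]
  have hPpos : 0 < P := by
    rw [hPdef]
    exact Finset.prod_pos fun i _ => by exact_mod_cast Nat.lt_of_lt_of_le Nat.zero_lt_one (hn1 i)
  -- the minimum of the n i
  set μ : ℕ := ⨅ i, n i with hμdef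
  have hFinNe : Nonempty (Fin k) := Fin.pos_iff_nonempty.1 hk
  have hμmem : μ ∈ Set.range n := by
    rw [hμdef, iInf]
    exact Nat.sInf_mem (Set.range_nonempty n)
  have hμle : ∀ i, μ ≤ n i := fun i => by
    rw [hμdef, iInf]
    exact Nat.sInf_le ⟨i, rfl⟩
  have hμ1 : 1 ≤ μ := by
    obtain ⟨i₀, hi₀⟩ := hμmem
    rw [← hi₀]
    exact hn1 i₀
  have hμpos : (0 : ℝ) < (μ : ℝ) := by exact_mod_cast hμ1
  -- the error term
  set Enat : ℕ := ∑ i, ∏ j ∈ Finset.univ.erase i, n j with hEdef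
  have hEr : 2 ^ k * (Enat : ℝ) ≤ 2 ^ (2 * k) * P / (μ : ℝ) := by
    have h1 : ∀ i : Fin k, (∏ j ∈ Finset.univ.erase i, n j) * μ ≤ ∏ j, n j := by
      intro i
      calc (∏ j ∈ Finset.univ.erase i, n j) * μ ≤ (∏ j ∈ Finset.univ.erase i, n j) * n i :=
            Nat.mul_le_mul_left _ (hμle i)
        _ = ∏ j, n j := Finset.prod_erase_mul _ _ (Finset.mem_univ i)
    have h2 : Enat * μ ≤ k * ∏ j, n j := by
      rw [hEdef, Finset.sum_mul]
      calc ∑ i : Fin k, (∏ j ∈ Finset.univ.erase i, n j) * μ ≤ ∑ _i : Fin k, ∏ j, n j :=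
            Finset.sum_le_sum fun i _ => h1 i
        _ = k * ∏ j, n j := by rw [Finset.sum_const, Finset.card_univ, Fintype.card_fin,
            smul_eq_mul]
    have h2r : (Enat : ℝ) * (μ : ℝ) ≤ (k : ℝ) * P := by
      rw [hPprod]
      exact_mod_cast h2
    have h3 : (Enat : ℝ) ≤ (k : ℝ) * P / (μ : ℝ) := by
      rw [le_div_iff₀ hμpos]
      exact h2r
    have hk2 : (k : ℝ) * 2 ^ k ≤ 2 ^ (2 * k) := by
      have : k * 2 ^ k ≤ 2 ^ k * 2 ^ k := Nat.mul_le_mul_right _ (show k < 2 ^ k from Nat.lt_two_pow_self).le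
      calc (k : ℝ) * 2 ^ k ≤ (2 : ℝ) ^ k * 2 ^ k := by exact_mod_cast this
        _ = 2 ^ (2 * k) := by rw [← pow_add]; ring_nf
    have hPμ : 0 ≤ P / (μ : ℝ) := le_of_lt (div_pos hPpos hμpos)
    calc 2 ^ k * (Enat : ℝ) ≤ 2 ^ k * ((k : ℝ) * P / (μ : ℝ)) := by
          apply mul_le_mul_of_nonneg_left h3 (by positivity)
      _ = ((k : ℝ) * 2 ^ k) * (P / (μ : ℝ)) := by ring
      _ ≤ 2 ^ (2 * k) * (P / (μ : ℝ)) := mul_le_mul_of_nonneg_right hk2 hPμ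
      _ = 2 ^ (2 * k) * P / (μ : ℝ) := by ring
  -- box lemma applied to A
  have boxA : 2 ^ k * A.card ≤ (A + A).card + 2 ^ k * Enat := box_sumset k n A hAbox
  have boxAr : 2 ^ k * (A.card : ℝ) - ((A + A).card : ℝ) ≤ 2 ^ k * (Enat : ℝ) := by
    have h : ((2 ^ k * A.card : ℕ) : ℝ) ≤ (((A + A).card + 2 ^ k * Enat : ℕ) : ℝ) :=
      Nat.cast_le.2 boxA
    push_cast at h
    linarith
  -- ε₀ is positive
  have hcoef : (0 : ℝ) < 1 / 2 - 1 / 2 ^ (k + 1) := by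
    have h2 : (4 : ℝ) ≤ 2 ^ (k + 1) := by
      have : (2 : ℝ) ^ 2 ≤ 2 ^ (k + 1) := pow_le_pow_right₀ (by norm_num) (by omega)
      norm_num at this
      linarith
    have h3 : (1 : ℝ) / 2 ^ (k + 1) < 1 / 2 := by
      apply div_lt_div_of_pos_left (by norm_num) (by positivity) (by linarith)
    linarith
  have hε₀pos : 0 < ε₀ := by
    by_contra hcon
    push_neg at hcon
    have h1 : 0 ≤ δ + 2 ^ (2 * k) / (μ : ℝ) := by
      have h2 : 2 ^ (2 * k) * P / (μ : ℝ) = (2 ^ (2 * k) / (μ : ℝ)) * P := by ring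
      have h3 : - (δ * P) ≤ (2 ^ (2 * k) / (μ : ℝ)) * P := by
        rw [← h2]; linarith [boxAr, hEr, hdk]
      nlinarith [hPpos]
    nlinarith [hcoef, hproviso]
  -- the intersection C
  set C := A ∩ A' with hCdef
  have hACsplit : C.card + (A \ A').card = A.card := Finset.card_inter_add_card_sdiff A A'
  have hsd : ((A \ A').card : ℝ) ≤ ε₀ / 2 ^ (k + 1) * P := by
    have hsub : A \ A' ⊆ symmDiff A A' := by
      intro x hx
      rw [Finset.mem_symmDiff]
      rw [Finset.mem_sdiff] at hx
      exact Or.inl ⟨hx.1, hx.2⟩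
    have h1 := Finset.card_le_card hsub
    have h2 := (Nat.cast_le (α := ℝ)).2 h1
    linarith [hsymm]
  have hAeq : (A.card : ℝ) = (C.card : ℝ) + ((A \ A').card : ℝ) := by exact_mod_cast hACsplit.symm
  have hClow : ε₀ * P - ε₀ / 2 ^ (k + 1) * P ≤ (C.card : ℝ) := by linarith [hsize]
  have hCup : (A.card : ℝ) ≤ (C.card : ℝ) + ε₀ / 2 ^ (k + 1) * P := by linarith
  have hCpos : 0 < (C.card : ℝ) := by
    have h3 : (1 : ℝ) / 2 ^ (k + 1) < 1 := by
      have := hcoef; linarith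
    have h4 : ε₀ / 2 ^ (k + 1) * P < ε₀ * P := by
      have h5 : ε₀ / 2 ^ (k + 1) = ε₀ * (1 / 2 ^ (k + 1)) := by ring
      have h6 : ε₀ * (1 / 2 ^ (k + 1)) * P < ε₀ * 1 * P :=
        mul_lt_mul_of_pos_right (mul_lt_mul_of_pos_left h3 hε₀pos) hPpos
      rw [h5]
      linarith
    linarith
  have hCne : C.Nonempty := by
    rw [← Finset.card_pos]
    exact_mod_cast hCpos
  obtain ⟨a₀, ha₀C⟩ := hCne
  have ha₀A : a₀ ∈ A := (Finset.mem_inter.1 ha₀C).1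
  have ha₀A' : a₀ ∈ A' := (Finset.mem_inter.1 ha₀C).2
  set H := AddSubgroup.closure ((fun x => x - a₀) '' (A' : Set (Fin k → ℤ))) with hHdef
  have hHne : H ≠ ⊤ := fun h => hnotred ⟨a₀, ha₀A', h⟩
  have hredA₀ : AddSubgroup.closure ((fun x => x - a₀) '' (A : Set (Fin k → ℤ))) = ⊤ := by
    refine top_le_iff.1 ?_
    rw [← hcl]
    exact closure_sub_mono _ a₁ a₀ (Finset.mem_coe.2 ha₁A)
  have hex : ∃ a ∈ A, a - a₀ ∉ H := by
    by_contra h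
    push_neg at h
    have hle : AddSubgroup.closure ((fun x => x - a₀) '' (A : Set (Fin k → ℤ))) ≤ H := by
      rw [AddSubgroup.closure_le]
      rintro _ ⟨x, hx, rfl⟩
      exact h x hx
    rw [hredA₀] at hle
    exact hHne (top_le_iff.1 hle)
  obtain ⟨a, haA, haH⟩ := hex
  have hCA' : ∀ c ∈ C, c - a₀ ∈ H := fun c hc =>
    AddSubgroup.subset_closure ⟨c, Finset.mem_coe.2 (Finset.mem_inter.1 hc).2, rfl⟩
  have hdisj : Disjoint ({a} + C) (C + C) := by
    rw [Finset.disjoint_left]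
    intro p hp1 hp2
    obtain ⟨x, hx, c, hc, rfl⟩ := Finset.mem_add.1 hp1
    obtain ⟨c₁, hc₁, c₂, hc₂, hEq⟩ := Finset.mem_add.1 hp2
    rw [Finset.mem_singleton] at hx
    subst hx
    apply haH
    have ha' : x = c₁ + c₂ - c := by rw [hEq]; abel
    have heq2 : x - a₀ = (c₁ - a₀) + (c₂ - a₀) - (c - a₀) := by rw [ha']; abel
    rw [heq2]
    exact sub_mem (add_mem (hCA' c₁ hc₁) (hCA' c₂ hc₂)) (hCA' c hc)
  have hsubAA : ({a} + C) ∪ (C + C) ⊆ A + A := by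
    apply Finset.union_subset
    · exact Finset.add_subset_add (Finset.singleton_subset_iff.2 haA) Finset.inter_subset_left
    · exact Finset.add_subset_add Finset.inter_subset_left Finset.inter_subset_left
  have hcards : C.card + (C + C).card ≤ (A + A).card := by
    have h1 := Finset.card_le_card hsubAA
    rw [Finset.card_union_of_disjoint hdisj, Finset.card_singleton_add] at h1
    exact h1
  have boxC : 2 ^ k * C.card ≤ (C + C).card + 2 ^ k * Enat :=
    box_sumset k n C (fun x hx i => hAbox x (Finset.inter_subset_left hx) i)
  have boxCr : 2 ^ k * (C.card : ℝ) ≤ ((C + C).card : ℝ) + 2 ^ k * (Enat : ℝ) := by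
    have h : ((2 ^ k * C.card : ℕ) : ℝ) ≤ (((C + C).card + 2 ^ k * Enat : ℕ) : ℝ) :=
      Nat.cast_le.2 boxC
    push_cast at h
    linarith
  have hcardsr : (C.card : ℝ) + ((C + C).card : ℝ) ≤ ((A + A).card : ℝ) := by exact_mod_cast hcards
  -- final chain
  have eq1 : (2 : ℝ) ^ k * (ε₀ / 2 ^ (k + 1) * P) = ε₀ / 2 * P := by
    rw [pow_succ]
    field_simp
  have eq2 : (1 / 2 - 1 / 2 ^ (k + 1)) * ε₀ * P
      = ε₀ * P - ε₀ / 2 ^ (k + 1) * P - ε₀ / 2 * P := by ring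
  have eq3 : 2 ^ (2 * k) * P / (μ : ℝ) = 2 ^ (2 * k) / (μ : ℝ) * P := by ring
  have hC2 : (2 : ℝ) ^ k * (A.card : ℝ)
      ≤ 2 ^ k * (C.card : ℝ) + 2 ^ k * (ε₀ / 2 ^ (k + 1) * P) := by
    have h := mul_le_mul_of_nonneg_left hCup (by positivity : (0 : ℝ) ≤ 2 ^ k)
    rw [mul_add] at h
    exact h
  have hPmul := mul_lt_mul_of_pos_right hproviso hPpos
  linarith [boxCr, hcardsr, hdk, hClow, hC2, hEr, eq1, eq2, eq3, hPmul]
end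

section
/- Let B = {1,...,n₁} × ... × {1,...,n_k} and π : ℤ^k → ℤ^{k−1} the projection away from the first coordinate. For A' ⊆ B and i ≥ 1, define E_i = {x ∈ π(A') : |π^{-1}(x) ∩ A'| ≥ i} and F_i = {x ∈ π(A'+A') : |π^{-1}(x) ∩ (A'+A')| ≥ i}. Then |A'| = Σ_{i=1}^{n₁} |E_i|, |A'+A'| = Σ_{i=1}^{2n₁−1} |F_i|, and for each i ≥ 1 we have E_i + E_i ⊆ F_{2i−1} and E_i + E_i ⊆ F_{2i−2} (the latter for i ≥ 2, interpreting F_j for valid indices). -/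
/-!
Counting each point of a fibre once for every level `i ≤ |fibre|` writes `|A|` as `∑ᵢ |E_i|`;
the levels stop at `n₁` for `A'` and at `2n₁ - 1` for `A' + A'` because a fibre injects into the
range of the first coordinate, `[1, n₁]` resp. `[2, 2n₁]`. The fibre of `A' + A'` over `x + y`
contains the sumset of the fibres over `x` and `y`, so Cauchy–Davenport in the torsion-free group
`ℤ^(m+1)` gives it at least `i + i - 1` points when both fibres have `i`; since `E_i` decreases
in `i`, this also gives the containment in `F_{2i-2}`.
-/

open Finset Pointwise

/-- Projection of `ℤ^{m+1}` away from the first coordinate. -/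
def proj (m : ℕ) (x : Fin (m + 1) → ℤ) : Fin m → ℤ := fun i => x i.succ

/-- `Elevel m A i` is the set of fibers (over the projection away from the first
coordinate) of `A` having at least `i` elements. -/
def Elevel (m : ℕ) (A : Finset (Fin (m + 1) → ℤ)) (i : ℕ) : Finset (Fin m → ℤ) :=
  (A.image (proj m)).filter fun x => i ≤ (A.filter fun a => proj m a = x).card

section Fibers

variable {m : ℕ}

lemma proj_add (a b : Fin (m + 1) → ℤ) : proj m (a + b) = proj m a + proj m b := rfl

lemma eq_of_head_eq_of_proj_eq {a b : Fin (m + 1) → ℤ} (h0 : a 0 = b 0)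
    (hp : proj m a = proj m b) : a = b :=
  funext fun i => Fin.cases h0 (fun j => congrFun hp j) i

def fiber (m : ℕ) (A : Finset (Fin (m + 1) → ℤ)) (x : Fin m → ℤ) : Finset (Fin (m + 1) → ℤ) :=
  A.filter fun a => proj m a = x

@[simp]
lemma mem_fiber {A : Finset (Fin (m + 1) → ℤ)} {x : Fin m → ℤ} {a : Fin (m + 1) → ℤ} :
    a ∈ fiber m A x ↔ a ∈ A ∧ proj m a = x :=
  mem_filter

lemma mem_Elevel {A : Finset (Fin (m + 1) → ℤ)} {i : ℕ} {x : Fin m → ℤ} (hi : 1 ≤ i) :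
    x ∈ Elevel m A i ↔ i ≤ #(fiber m A x) := by
  refine mem_filter.trans ⟨And.right, fun h => ⟨?_, h⟩⟩
  obtain ⟨a, ha⟩ := card_pos.1 (by omega : 0 < #(fiber m A x))
  exact mem_image.2 ⟨a, (mem_fiber.1 ha).1, (mem_fiber.1 ha).2⟩

lemma Elevel_antitone (A : Finset (Fin (m + 1) → ℤ)) : Antitone (Elevel m A) :=
  fun _ _ hij _ hx => mem_filter.2 ⟨(mem_filter.1 hx).1, hij.trans (mem_filter.1 hx).2⟩

lemma card_fiber_le {A : Finset (Fin (m + 1) → ℤ)} {S : Finset ℤ} (hS : ∀ a ∈ A, a 0 ∈ S)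
    (x : Fin m → ℤ) : #(fiber m A x) ≤ #S :=
  card_le_card_of_injOn (fun a => a 0) (fun a ha => hS a (mem_fiber.1 ha).1)
    fun _ ha _ hb hab => eq_of_head_eq_of_proj_eq hab
      ((mem_fiber.1 ha).2.trans (mem_fiber.1 hb).2.symm)

lemma card_eq_sum_card_Elevel (A : Finset (Fin (m + 1) → ℤ)) {N : ℕ}
    (hN : ∀ x, #(fiber m A x) ≤ N) :
    #A = ∑ i ∈ Icc 1 N, #(Elevel m A i) := by
  have levels (x : Fin m → ℤ) :
      #(fiber m A x) = ∑ i ∈ Icc 1 N, if i ≤ #(fiber m A x) then 1 else 0 := by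
    have : (Icc 1 N).filter (· ≤ #(fiber m A x)) = Icc 1 #(fiber m A x) := by
      ext i
      simp only [mem_filter, mem_Icc]
      have := hN x
      omega
    rw [← card_filter, this, Nat.card_Icc, Nat.add_sub_cancel]
  calc #A = ∑ x ∈ A.image (proj m), #(fiber m A x) := card_eq_sum_card_image _ _
    _ = ∑ i ∈ Icc 1 N, #(Elevel m A i) := by
      rw [sum_congr rfl fun x _ => levels x, sum_comm]
      exact sum_congr rfl fun i _ => (card_filter _ _).symm

lemma fiber_add_fiber_subset (A B : Finset (Fin (m + 1) → ℤ)) (x y : Fin m → ℤ) :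
    fiber m A x + fiber m B y ⊆ fiber m (A + B) (x + y) := by
  intro _ h
  obtain ⟨a, ha, b, hb, rfl⟩ := mem_add.1 h
  rw [mem_fiber] at ha hb ⊢
  exact ⟨add_mem_add ha.1 hb.1, by rw [proj_add, ha.2, hb.2]⟩

lemma Elevel_add_Elevel_subset (A B : Finset (Fin (m + 1) → ℤ)) {i j : ℕ} (hi : 1 ≤ i)
    (hj : 1 ≤ j) : Elevel m A i + Elevel m B j ⊆ Elevel m (A + B) (i + j - 1) := by
  intro _ h
  obtain ⟨x, hx, y, hy, rfl⟩ := mem_add.1 h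
  rw [mem_Elevel hi] at hx
  rw [mem_Elevel hj] at hy
  rw [mem_Elevel (by omega)]
  have cauchy_davenport := cauchy_davenport_of_isAddTorsionFree
    (card_pos.1 (by omega : 0 < #(fiber m A x))) (card_pos.1 (by omega : 0 < #(fiber m B y)))
  have := card_le_card (fiber_add_fiber_subset A B x y)
  omega

end Fibers

/-- Layer-cake decomposition of `|A'|` and `|A' + A'|` along fibers, together with the
containments `E_i + E_i ⊆ F_{2i-1}` and (for `i ≥ 2`) `E_i + E_i ⊆ F_{2i-2}`. -/
theorem fiber_layers (m : ℕ) (n : Fin (m + 1) → ℕ) (A' : Finset (Fin (m + 1) → ℤ))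
    (hbox : ∀ a ∈ A', ∀ i, 1 ≤ a i ∧ a i ≤ (n i : ℤ)) :
    (A'.card = ∑ i ∈ Finset.Icc 1 (n 0), (Elevel m A' i).card) ∧
    ((A' + A').card = ∑ i ∈ Finset.Icc 1 (2 * n 0 - 1), (Elevel m (A' + A') i).card) ∧
    (∀ i : ℕ, 1 ≤ i → Elevel m A' i + Elevel m A' i ⊆ Elevel m (A' + A') (2 * i - 1)) ∧
    (∀ i : ℕ, 2 ≤ i → Elevel m A' i + Elevel m A' i ⊆ Elevel m (A' + A') (2 * i - 2)) := by
  have head_mem : ∀ a ∈ A', a 0 ∈ Icc (1 : ℤ) (n 0) := fun a ha => mem_Icc.2 (hbox a ha 0)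
  have head_mem_add : ∀ a ∈ A' + A', a 0 ∈ Icc (2 : ℤ) (2 * n 0) := by
    intro _ h
    obtain ⟨a, ha, b, hb, rfl⟩ := mem_add.1 h
    have := head_mem a ha
    have := head_mem b hb
    simp only [mem_Icc, Pi.add_apply] at *
    omega
  have odd_level (i : ℕ) (hi : 1 ≤ i) :
      Elevel m A' i + Elevel m A' i ⊆ Elevel m (A' + A') (2 * i - 1) := by
    simpa only [two_mul] using Elevel_add_Elevel_subset A' A' hi hi
  refine ⟨card_eq_sum_card_Elevel A' fun x => ?_,
    card_eq_sum_card_Elevel (A' + A') fun x => ?_, odd_level,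
    fun i hi => (odd_level i (by omega)).trans (Elevel_antitone _ (by omega))⟩
  · simpa using card_fiber_le head_mem x
  · have := card_fiber_le head_mem_add x
    rw [Int.card_Icc] at this
    omega
end

section
/- Let A ⊆ ℤ^k be a finite set contained in the box C = ∏_{i=1}^k {−n_i+1, ..., n_i−1} (with 0 ∈ A), and suppose the subgroup Λ of ℤ^k generated by A is generated by linearly independent vectors v₁, ..., v_k which are in lower-triangular Hermite-type form: v_{j,i} = 0 for j > i, |v_{j,i}| ≤ |v_{i,i}| for j ≤ i, and v_{i,i} ≠ 0. Then for every point p = p₁v₁ + ... + p_kv_k ∈ C ∩ Λ, we have |p_i| ≤ 2^{i−1}(n_i − 1) for all 1 ≤ i ≤ k, assuming n₁ ≤ n₂ ≤ ... ≤ n_k. -/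
/-!
The `i`-th coordinate of `∑ⱼ pⱼ vⱼ` only involves `j ≤ i`, so
`|pᵢ| |vᵢᵢ| ≤ (nᵢ - 1) + ∑_{j<i} |pⱼ| |vⱼᵢ|`. By strong induction, `|vⱼᵢ| ≤ |vᵢᵢ|` and
`nⱼ ≤ nᵢ`, the sum is at most `(2^i - 1)(nᵢ - 1)|vᵢᵢ|`, and `|vᵢᵢ| ≥ 1` absorbs the
remaining `nᵢ - 1`.
-/

open Finset

theorem Finset.sum_eq_add_sum_Iio_of_eq_zero {ι M : Type*} [LinearOrder ι] [Fintype ι]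
    [LocallyFiniteOrderBot ι] [AddCommMonoid M] {f : ι → M} {i : ι}
    (h : ∀ j, i < j → f j = 0) : ∑ j, f j = f i + ∑ j ∈ Iio i, f j := by
  rw [← sum_cons (s := Iio i) (a := i) notMem_Iio_self, ← Iic_eq_cons_Iio]
  refine (sum_subset (subset_univ _) fun j _ hj => h j ?_).symm
  simpa using hj

theorem Fin.sum_Iio_two_pow {R : Type*} [Ring R] {k : ℕ} (i : Fin k) :
    ∑ j ∈ Iio i, (2 : R) ^ (j : ℕ) = 2 ^ (i : ℕ) - 1 := by
  rw [← geom_sum_mul, ← Nat.Iio_eq_range, ← Fin.map_valEmbedding_Iio, sum_map]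
  norm_num

theorem abs_mul_diag_le_of_lowerTriangular {R ι : Type*} [CommRing R] [LinearOrder R]
    [IsStrictOrderedRing R] [LinearOrder ι] [Fintype ι] [LocallyFiniteOrderBot ι]
    {v : ι → ι → R} (htri : ∀ i j, i < j → v j i = 0) (p : ι → R) (i : ι) :
    |p i| * |v i i| ≤ |∑ j, p j * v j i| + ∑ j ∈ Iio i, |p j| * |v j i| := by
  have hsplit := sum_eq_add_sum_Iio_of_eq_zero (f := fun j => p j * v j i) (i := i)
    fun j hj => by simp [htri i j hj]
  calc |p i| * |v i i| = |∑ j, p j * v j i - ∑ j ∈ Iio i, p j * v j i| := by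
        rw [hsplit, add_sub_cancel_right, abs_mul]
    _ ≤ |∑ j, p j * v j i| + |∑ j ∈ Iio i, p j * v j i| := abs_sub _ _
    _ ≤ |∑ j, p j * v j i| + ∑ j ∈ Iio i, |p j| * |v j i| := by
        gcongr
        exact (abs_sum_le_sum_abs _ _).trans_eq (by simp only [abs_mul])

theorem abs_coeff_le_two_pow_mul_of_lowerTriangular {R : Type*} [CommRing R] [LinearOrder R]
    [IsStrictOrderedRing R] {k : ℕ} {n : Fin k → R} (hmono : Monotone n)
    {v : Fin k → Fin k → R} (htri : ∀ i j, i < j → v j i = 0)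
    (hdom : ∀ i j, j ≤ i → |v j i| ≤ |v i i|) (hdiag : ∀ i, 1 ≤ |v i i|) {p : Fin k → R}
    (hp : ∀ i, |∑ j, p j * v j i| ≤ n i - 1) (i : Fin k) :
    |p i| ≤ 2 ^ (i : ℕ) * (n i - 1) := by
  induction i using Fin.strong_induction_on with
  | _ i ih =>
    have hn : 0 ≤ n i - 1 := (abs_nonneg _).trans (hp i)
    have hprev : ∀ j ∈ Iio i, |p j| * |v j i| ≤ 2 ^ (j : ℕ) * ((n i - 1) * |v i i|) := by
      intro j hj
      have hj : j < i := mem_Iio.mp hj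
      calc |p j| * |v j i| ≤ 2 ^ (j : ℕ) * (n j - 1) * |v i i| :=
            mul_le_mul (ih j hj) (hdom i j hj.le) (abs_nonneg _) ((abs_nonneg _).trans (ih j hj))
        _ ≤ 2 ^ (j : ℕ) * (n i - 1) * |v i i| := by grw [hmono hj.le]
        _ = 2 ^ (j : ℕ) * ((n i - 1) * |v i i|) := mul_assoc _ _ _
    refine le_of_mul_le_mul_right ?_ (zero_lt_one.trans_le (hdiag i))
    calc |p i| * |v i i|
        ≤ (n i - 1) + ∑ j ∈ Iio i, 2 ^ (j : ℕ) * ((n i - 1) * |v i i|) := by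
          grw [abs_mul_diag_le_of_lowerTriangular htri, hp i, sum_le_sum hprev]
      _ = (n i - 1) + (2 ^ (i : ℕ) - 1) * ((n i - 1) * |v i i|) := by
          rw [← sum_mul, Fin.sum_Iio_two_pow]
      _ ≤ 2 ^ (i : ℕ) * (n i - 1) * |v i i| := by nlinarith [hdiag i]

theorem hermite_coefficient_bound_general (k : ℕ) (n : Fin k → ℤ)
    (hmono : ∀ i j : Fin k, i ≤ j → n i ≤ n j)
    (v : Fin k → Fin k → ℤ)
    (htri : ∀ i j : Fin k, i < j → v j i = 0)
    (hdom : ∀ i j : Fin k, j ≤ i → |v j i| ≤ |v i i|)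
    (hdiag : ∀ i, v i i ≠ 0)
    (p : Fin k → ℤ) (hp : ∀ i, |∑ j, p j * v j i| ≤ n i - 1) :
    ∀ i, |p i| ≤ 2 ^ (i : ℕ) * (n i - 1) :=
  abs_coeff_le_two_pow_mul_of_lowerTriangular hmono htri hdom (fun i => Int.one_le_abs (hdiag i))
    hp

/-- If the subgroup generated by `A ⊆ C = ∏ {-nᵢ+1, …, nᵢ-1}` is generated by linearly
independent vectors `v₁, …, v_k` in lower-triangular Hermite-type form and
`n₁ ≤ ⋯ ≤ n_k`, then any `p₁ v₁ + ⋯ + p_k v_k ∈ C` has `|pᵢ| ≤ 2^{i-1} (nᵢ - 1)`. -/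
theorem hermite_coefficient_bound (k : ℕ) (n : Fin k → ℤ)
    (hmono : ∀ i j : Fin k, i ≤ j → n i ≤ n j)
    (A : Set (Fin k → ℤ)) (h0A : (0 : Fin k → ℤ) ∈ A)
    (hAC : ∀ a ∈ A, ∀ i, |a i| ≤ n i - 1)
    (v : Fin k → Fin k → ℤ)
    (hspan : AddSubgroup.closure A = AddSubgroup.closure (Set.range v))
    (htri : ∀ i j : Fin k, i < j → v j i = 0)
    (hdom : ∀ i j : Fin k, j ≤ i → |v j i| ≤ |v i i|)
    (hdiag : ∀ i, v i i ≠ 0)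
    (p : Fin k → ℤ) (hp : ∀ i, |∑ j, p j * v j i| ≤ n i - 1) :
    ∀ i, |p i| ≤ 2 ^ (i : ℕ) * (n i - 1) :=
  hermite_coefficient_bound_general k n hmono v htri hdom hdiag p hp
end
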